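/- arXiv:1511.03813 — 5 statements merged into one kernel-verified Lean document; each statement's English description precedes it below -/
import Mathlib

section
/- For any two Gaussian primes λ₁, λ₂ coprime to 1+i and to each other's conjugates, the product of quartic residue symbols (λ₁/conj(λ₂))₄ · (conj(λ₁)/λ₂)₄ = 1. -/
/-!
Put `k = (N λ - 1) / 4`. Since `ℤ[i]/(λ)` is a field with `N λ` elements, `α ^ k` is `0` or a
fourth root of unity there, i.e. `α ^ k ≡ u (mod λ)` for some `u ∈ {±1, ±i, 0}`; and `u` is unique,
because `λ ∣ u - v` would give `λ ∣ N (u - v) ∣ 4 = -(1 + i)⁴`. Conjugating the congruence, and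
using `N (conj λ) = N λ`, gives `(conj α / conj λ)₄ = conj (α/λ)₄`. Hence
`(λ₁ / conj λ₂)₄ = conj (conj λ₁ / λ₂)₄`, and the product is `|u|² = 1` for `u = (conj λ₁ / λ₂)₄`,
which is nonzero because `λ₂ ∤ conj λ₁`.
-/
open Zsqrtd
open scoped Classical

/-- The imaginary unit in the Gaussian integers. -/
def gi : GaussianInt := ⟨0, 1⟩

/-- The quartic residue symbol (α/λ)₄ at a Gaussian prime λ coprime to 1+i:
the unique element of {1, -1, i, -i, 0} congruent to α^((Nλ-1)/4) modulo λ. -/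
noncomputable def quarticSymbol (lam α : GaussianInt) : GaussianInt :=
  if h : ∃ u : GaussianInt, (u = 1 ∨ u = -1 ∨ u = gi ∨ u = -gi ∨ u = 0) ∧
      lam ∣ (α ^ (((Zsqrtd.norm lam - 1) / 4).toNat) - u)
  then h.choose else 0

noncomputable def GaussianInt.basis : Module.Basis (Fin 2) ℤ GaussianInt :=
  Module.Basis.ofEquivFun
    { toFun := fun x => ![x.re, x.im]
      invFun := fun f => ⟨f 0, f 1⟩
      left_inv := fun x => by simp
      right_inv := fun f => by ext i; fin_cases i <;> simp
      map_add' := fun x y => by ext i; fin_cases i <;> simp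
      map_smul' := fun n x => by ext i; fin_cases i <;> simp }

noncomputable instance : Module.Free ℤ GaussianInt := .of_basis GaussianInt.basis

instance : Module.Finite ℤ GaussianInt := .of_basis GaussianInt.basis

namespace GaussianInt

lemma algebraNorm_eq_norm (x : GaussianInt) : Algebra.norm ℤ x = x.norm := by
  rw [Algebra.norm_eq_matrix_det GaussianInt.basis x, Matrix.det_fin_two]
  simp only [Algebra.leftMulMatrix_eq_repr_mul]
  simp [GaussianInt.basis, Module.Basis.ofEquivFun_repr_apply, Zsqrtd.norm_def,
    Zsqrtd.re_mul, Zsqrtd.im_mul]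

lemma natCard_quotient_span_singleton (x : GaussianInt) :
    Nat.card (GaussianInt ⧸ Ideal.span {x}) = x.norm.natAbs := by
  rw [← Submodule.cardQuot_apply, ← Ideal.absNorm_apply, Ideal.absNorm_span_singleton,
    algebraNorm_eq_norm]

lemma mk_pow_natAbs_norm_sub_one_eq_one {lam α : GaussianInt} (hp : Prime lam) (hα : ¬ lam ∣ α) :
    Ideal.Quotient.mk (Ideal.span {lam}) α ^ (lam.norm.natAbs - 1) = 1 := by
  have : (Ideal.span {lam}).IsMaximal :=
    PrincipalIdealRing.isMaximal_of_irreducible hp.irreducible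
  let := Ideal.Quotient.field (Ideal.span {lam})
  have hcard := natCard_quotient_span_singleton lam
  have : Finite (GaussianInt ⧸ Ideal.span {lam}) := Nat.finite_of_card_ne_zero <| by
    simpa [hcard, GaussianInt.norm_eq_zero] using hp.ne_zero
  let := Fintype.ofFinite (GaussianInt ⧸ Ideal.span {lam})
  rw [← hcard, Nat.card_eq_fintype_card]
  refine FiniteField.pow_card_sub_one_eq_one _ ?_
  rwa [Ne, Ideal.Quotient.eq_zero_iff_mem, Ideal.mem_span_singleton]

lemma gi_sq : gi ^ 2 = -1 := by decide

lemma not_isUnit_one_add_gi : ¬ IsUnit (1 + gi) := by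
  rw [← Zsqrtd.norm_eq_one_iff' (by norm_num)]
  decide

lemma norm_emod_four_of_not_dvd {x : GaussianInt} (hx : ¬ (1 + gi) ∣ x) : x.norm % 4 = 1 := by
  rcases Int.even_or_odd x.re with ⟨a, ha⟩ | ⟨a, ha⟩ <;>
    rcases Int.even_or_odd x.im with ⟨b, hb⟩ | ⟨b, hb⟩
  · exact absurd ⟨⟨a + b, b - a⟩, by ext <;> simp [gi, ha, hb]; ring⟩ hx
  · rw [Zsqrtd.norm_def, ha, hb]; ring_nf; omega
  · rw [Zsqrtd.norm_def, ha, hb]; ring_nf; omega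
  · exact absurd ⟨⟨a + b + 1, b - a⟩, by ext <;> simp [gi, ha, hb] <;> ring⟩ hx

lemma isCoprime_star_one_add_gi {x : GaussianInt} (hx : IsCoprime x (1 + gi)) :
    IsCoprime (star x) (1 + gi) := by
  have h := hx.map (starRingEnd GaussianInt)
  rw [show starRingEnd GaussianInt (1 + gi) = -gi * (1 + gi) by decide] at h
  exact h.of_isCoprime_of_dvd_right (dvd_mul_left _ _)

end GaussianInt

open GaussianInt

lemma eq_one_or_eq_neg_one_or_eq_or_eq_neg_of_pow_four_eq_one {R : Type*} [CommRing R]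
    [NoZeroDivisors R] {j x : R} (hj : j ^ 2 = -1) (hx : x ^ 4 = 1) :
    x = 1 ∨ x = -1 ∨ x = j ∨ x = -j := by
  have : (x - 1) * (x + 1) * (x - j) * (x + j) = 0 := by
    linear_combination hx + (1 - x ^ 2) * hj
  simp only [mul_eq_zero, sub_eq_zero, add_eq_zero_iff_eq_neg] at this
  tauto

def IsQuarticValue (u : GaussianInt) : Prop := u = 1 ∨ u = -1 ∨ u = gi ∨ u = -gi ∨ u = 0

namespace IsQuarticValue

lemma star_mul_self {u : GaussianInt} (hu : IsQuarticValue u) (h0 : u ≠ 0) :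
    star u * u = 1 := by
  rcases hu with rfl | rfl | rfl | rfl | rfl <;> first | decide | exact absurd rfl h0

lemma norm_sub_dvd_four {u v : GaussianInt} (hu : IsQuarticValue u) (hv : IsQuarticValue v)
    (huv : u ≠ v) : (u - v).norm ∣ 4 := by
  rcases hu with rfl | rfl | rfl | rfl | rfl <;> rcases hv with rfl | rfl | rfl | rfl | rfl <;>
    first | exact absurd rfl huv | decide

lemma eq_of_dvd_sub {lam u v : GaussianInt} (hl : ¬ IsUnit lam) (hc : IsCoprime lam (1 + gi))
    (hu : IsQuarticValue u) (hv : IsQuarticValue v) (h : lam ∣ u - v) : u = v := by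
  by_contra huv
  have h4 : lam ∣ ((4 : ℤ) : GaussianInt) :=
    calc lam ∣ u - v := h
      _ ∣ ((u - v).norm : GaussianInt) := ⟨_, Zsqrtd.norm_eq_mul_conj _⟩
      _ ∣ ((4 : ℤ) : GaussianInt) := Int.cast_dvd_cast _ _ (norm_sub_dvd_four hu hv huv)
  rw [show ((4 : ℤ) : GaussianInt) = -(1 + gi) ^ 4 by decide, dvd_neg] at h4
  exact hl ((hc.pow_right (n := 4)).isUnit_of_dvd' dvd_rfl h4)

lemma star {u : GaussianInt} (hu : IsQuarticValue u) : IsQuarticValue (Star.star u) := by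
  unfold IsQuarticValue
  rcases hu with rfl | rfl | rfl | rfl | rfl <;> decide

end IsQuarticValue

section QuarticSymbol

variable {lam α : GaussianInt}

lemma exists_isQuarticValue_dvd (hp : Prime lam) (hc : IsCoprime lam (1 + gi)) :
    ∃ u, IsQuarticValue u ∧ lam ∣ α ^ ((lam.norm - 1) / 4).toNat - u := by
  have hmod := norm_emod_four_of_not_dvd fun h =>
    not_isUnit_one_add_gi (hc.isUnit_of_dvd' h dvd_rfl)
  have hnorm : lam.norm ≠ 1 := fun h =>
    hp.not_isUnit ((Zsqrtd.norm_eq_one_iff' (by norm_num) _).mp h)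
  have hnn : 0 ≤ lam.norm := Zsqrtd.norm_nonneg (by norm_num) _
  set k := ((lam.norm - 1) / 4).toNat
  by_cases hα : lam ∣ α
  · refine ⟨0, Or.inr (Or.inr (Or.inr (Or.inr rfl))), ?_⟩
    rw [sub_zero]
    exact hα.trans (dvd_pow_self α (by omega))
  have hk : lam.norm.natAbs - 1 = 4 * k := by omega
  have : (Ideal.span {lam}).IsPrime := (Ideal.span_singleton_prime hp.ne_zero).mpr hp
  let f := Ideal.Quotient.mk (Ideal.span {lam})
  have hx : (f α ^ k) ^ 4 = 1 := by
    rw [← pow_mul, mul_comm, ← hk, mk_pow_natAbs_norm_sub_one_eq_one hp hα]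
  have hj : f gi ^ 2 = -1 := by rw [← map_pow, gi_sq, map_neg, map_one]
  have hdvd {u : GaussianInt} (h : f α ^ k = f u) : lam ∣ α ^ k - u := by
    rw [← map_pow] at h
    exact Ideal.mem_span_singleton.mp (Ideal.Quotient.eq.mp h)
  rcases eq_one_or_eq_neg_one_or_eq_or_eq_neg_of_pow_four_eq_one hj hx with h | h | h | h
  · exact ⟨1, Or.inl rfl, hdvd (by rw [h, map_one])⟩
  · exact ⟨-1, Or.inr (Or.inl rfl), hdvd (by rw [h, map_neg, map_one])⟩
  · exact ⟨gi, Or.inr (Or.inr (Or.inl rfl)), hdvd h⟩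
  · exact ⟨-gi, Or.inr (Or.inr (Or.inr (Or.inl rfl))), hdvd (by rw [h, map_neg])⟩

lemma quarticSymbol_spec (hp : Prime lam) (hc : IsCoprime lam (1 + gi)) :
    IsQuarticValue (quarticSymbol lam α) ∧
      lam ∣ α ^ ((lam.norm - 1) / 4).toNat - quarticSymbol lam α := by
  have h : ∃ u, (u = 1 ∨ u = -1 ∨ u = gi ∨ u = -gi ∨ u = 0) ∧
      lam ∣ α ^ ((lam.norm - 1) / 4).toNat - u := exists_isQuarticValue_dvd hp hc
  rw [quarticSymbol, dif_pos h]
  exact h.choose_spec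

lemma quarticSymbol_eq_of_dvd (hp : Prime lam) (hc : IsCoprime lam (1 + gi)) {u : GaussianInt}
    (hu : IsQuarticValue u) (h : lam ∣ α ^ ((lam.norm - 1) / 4).toNat - u) :
    quarticSymbol lam α = u := by
  obtain ⟨hval, hdvd⟩ := quarticSymbol_spec (α := α) hp hc
  refine IsQuarticValue.eq_of_dvd_sub hp.not_isUnit hc hval hu ?_
  simpa using dvd_sub h hdvd

lemma quarticSymbol_ne_zero (hp : Prime lam) (hc : IsCoprime lam (1 + gi)) (hα : ¬ lam ∣ α) :
    quarticSymbol lam α ≠ 0 := by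
  intro h0
  have hdvd := (quarticSymbol_spec (α := α) hp hc).2
  rw [h0, sub_zero] at hdvd
  exact hα (hp.dvd_of_dvd_pow hdvd)

lemma quarticSymbol_star_star (hp : Prime lam) (hc : IsCoprime lam (1 + gi)) :
    quarticSymbol (star lam) (star α) = star (quarticSymbol lam α) := by
  obtain ⟨hval, hdvd⟩ := quarticSymbol_spec (α := α) hp hc
  have hp' : Prime (star lam) :=
    (MulEquiv.prime_iff (starRingAut : RingAut GaussianInt).toMulEquiv).mpr hp
  refine quarticSymbol_eq_of_dvd hp' (isCoprime_star_one_add_gi hc) hval.star ?_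
  simpa [starRingEnd_apply, Zsqrtd.norm_conj] using map_dvd (starRingEnd GaussianInt) hdvd

end QuarticSymbol

theorem stmt2_general (lam₁ lam₂ : GaussianInt)
    (h₂ : Prime lam₂)
    (hc₂ : IsCoprime lam₂ (1 + gi))
    (hcross₂ : IsCoprime (star lam₁) lam₂) :
    quarticSymbol (star lam₂) lam₁ * quarticSymbol lam₂ (star lam₁) = 1 := by
  have hconj : quarticSymbol (star lam₂) lam₁ = star (quarticSymbol lam₂ (star lam₁)) := by
    simpa using quarticSymbol_star_star (α := star lam₁) h₂ hc₂
  have hα : ¬ lam₂ ∣ star lam₁ := fun h => h₂.not_isUnit (hcross₂.isUnit_of_dvd' h dvd_rfl)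
  rw [hconj]
  exact IsQuarticValue.star_mul_self (quarticSymbol_spec h₂ hc₂).1 (quarticSymbol_ne_zero h₂ hc₂ hα)

/-- For Gaussian primes λ₁, λ₂ coprime to 1+i, with λ₁ coprime to the conjugate of λ₂,
we have (λ₁ / conj λ₂)₄ · (conj λ₁ / λ₂)₄ = 1. -/
theorem stmt2 (lam₁ lam₂ : GaussianInt)
    (h₁ : Prime lam₁) (h₂ : Prime lam₂)
    (hc₁ : IsCoprime lam₁ (1 + gi)) (hc₂ : IsCoprime lam₂ (1 + gi))
    (hcross₁ : IsCoprime lam₁ (star lam₂)) (hcross₂ : IsCoprime (star lam₁) lam₂) :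
    quarticSymbol (star lam₂) lam₁ * quarticSymbol lam₂ (star lam₁) = 1 :=
  stmt2_general lam₁ lam₂ h₂ hc₂ hcross₂
end

section
/- Let G be the subgroup of (ℤ[i]/16ℤ[i])^× consisting of classes of elements ≡ 1 (mod 2+2i), and let χ₁(g) = i^((N(g)-1)/4) and χ₂(g) = (2/g)₄ (the quartic residue symbol of 2). Then χ₁² = χ₂², and both χ₁ and χ₂ have order 4 as characters of G, and χ₁ ≠ χ₂. -/
open Zsqrtd

/-- A Gaussian integer is primary if it is congruent to 1 modulo 2+2i. -/
def IsPrimaryGI (θ : GaussianInt) : Prop := (2 + 2 * gi) ∣ (θ - 1)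

/-- χ₁(θ) = i^((N(θ)-1)/4), defined on primary Gaussian integers. -/
def chi1 (θ : GaussianInt) : GaussianInt := gi ^ ((((Zsqrtd.norm θ - 1) / 4) % 4).toNat)

/-- χ₂(θ) = (2/θ)₄ = i^(-b) for a primary Gaussian integer θ = a + 2bi. -/
def chi2 (θ : GaussianInt) : GaussianInt := gi ^ (((-(θ.im / 2)) % 4).toNat)

lemma gi_pow_four (k : ℕ) : (gi ^ k) ^ 4 = 1 := by
  rw [← pow_mul, mul_comm, pow_mul]
  have h4 : gi ^ 4 = 1 := by decide
  rw [h4, one_pow]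

lemma gi_pow_sq_eq {m n : ℕ} (h : m % 2 = n % 2) : (gi ^ m) ^ 2 = (gi ^ n) ^ 2 := by
  have h2 : gi ^ 2 = -1 := by decide
  have e : ∀ k : ℕ, (gi ^ k) ^ 2 = (-1 : GaussianInt) ^ (k % 2) := by
    intro k
    rw [← pow_mul, mul_comm, pow_mul, h2]
    conv_lhs => rw [← Nat.div_add_mod k 2]
    rw [pow_add, pow_mul]
    norm_num
  rw [e, e, h]

lemma sq_par (z : ℤ) : z ^ 2 % 2 = z % 2 := by
  rw [pow_two, Int.mul_emod]
  rcases Int.emod_two_eq z with h | h <;> rw [h] <;> norm_num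

/-- On the group G of primary classes mod 16, χ₁² = χ₂², both χ₁ and χ₂ have
order 4, and χ₁ ≠ χ₂.  (Characters are determined by their values on primary
representatives; order 4 means each character takes a value of multiplicative
order 4, while χ^4 = 1 identically.) -/
theorem stmt4 :
    (∀ θ : GaussianInt, IsPrimaryGI θ → chi1 θ ^ 2 = chi2 θ ^ 2) ∧
    (∀ θ : GaussianInt, IsPrimaryGI θ → chi1 θ ^ 4 = 1 ∧ chi2 θ ^ 4 = 1) ∧
    (∃ θ : GaussianInt, IsPrimaryGI θ ∧ orderOf (chi1 θ) = 4) ∧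
    (∃ θ : GaussianInt, IsPrimaryGI θ ∧ orderOf (chi2 θ) = 4) ∧
    (∃ θ : GaussianInt, IsPrimaryGI θ ∧ chi1 θ ≠ chi2 θ) := by
  have hprim : IsPrimaryGI ⟨-1, 2⟩ := ⟨gi, by decide⟩
  have hc1 : chi1 ⟨-1, 2⟩ = gi := by decide
  have hc2 : chi2 ⟨-1, 2⟩ = gi ^ 3 := by decide
  refine ⟨?_, ?_, ?_, ?_, ?_⟩
  · intro θ hθ
    obtain ⟨c, hc⟩ := hθ
    have hre : θ.re = 2 * (c.re - c.im) + 1 := by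
      have h := congrArg Zsqrtd.re hc
      simp [Zsqrtd.re_mul, Zsqrtd.re_sub, Zsqrtd.re_add, gi, GaussianInt] at h
      omega
    have him : θ.im = 2 * (c.re + c.im) := by
      have h := congrArg Zsqrtd.im hc
      simp [Zsqrtd.im_mul, Zsqrtd.im_sub, Zsqrtd.im_add, gi, GaussianInt] at h
      omega
    set A := c.re - c.im with hA
    set B := c.re + c.im with hB
    have hnorm : Zsqrtd.norm θ - 1 = 4 * (A ^ 2 + A + B ^ 2) := by
      rw [Zsqrtd.norm, hre, him]
      ring
    have hdiv : (Zsqrtd.norm θ - 1) / 4 = A ^ 2 + A + B ^ 2 := by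
      rw [hnorm]
      exact Int.mul_ediv_cancel_left _ (by norm_num)
    have himdiv : θ.im / 2 = B := by
      rw [him]
      exact Int.mul_ediv_cancel_left _ (by norm_num)
    rw [chi1, chi2, hdiv, himdiv]
    apply gi_pow_sq_eq
    have hPA := sq_par A
    have hPB := sq_par B
    omega
  · intro θ _
    exact ⟨gi_pow_four _, gi_pow_four _⟩
  · refine ⟨⟨-1, 2⟩, hprim, ?_⟩
    rw [hc1, orderOf_eq_iff (by norm_num)]
    exact ⟨by decide, by decide⟩
  · refine ⟨⟨-1, 2⟩, hprim, ?_⟩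
    rw [hc2, orderOf_eq_iff (by norm_num)]
    exact ⟨by decide, by decide⟩
  · exact ⟨⟨-1, 2⟩, hprim, by rw [hc1, hc2]; decide⟩
end

section
/- For α₁ ∈ {1, 9}, the set A₁₆ of primary classes a in (ℤ[i]/16ℤ[i])^× satisfying N(a) ≡ α₁ (mod 16) and (2/a)₄ = (-1)^((α₁-9)/8) has cardinality φ(16)/2⁵, where φ(16) = #(ℤ[i]/16ℤ[i])^×. -/
/-!
Reduction modulo 16 identifies `ℤ[i]/16` with `(ZMod 16)[i]`, and each condition on `θ` depends
only on `θ mod 16`: being primary means `im θ` even and `re θ + im θ ≡ 1 (mod 4)`, the norm is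
`re² + im²`, and `(2/θ)₄ = i^(-im θ / 2)` depends on `im θ mod 8`. So both sides are counts of
residue pairs in `(ZMod 16)²`: a class is a unit iff its norm is odd (128 classes), and for
`α₁ = 1` and `α₁ = 9` exactly `4 = 128 / 2⁵` classes satisfy the conditions.
-/

open Zsqrtd

open QuadraticAlgebra

instance QuadraticAlgebra.instFintype {R : Type*} [Fintype R] (a b : R) :
    Fintype (QuadraticAlgebra R a b) :=
  Fintype.ofEquiv _ (equivProd a b).symm

lemma ZMod.isUnit_iff_odd_val {k : ℕ} (hk : k ≠ 0) (u : ZMod (2 ^ k)) :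
    IsUnit u ↔ Odd u.val := by
  rw [← Nat.coprime_two_right, ← Nat.coprime_pow_right_iff (Nat.pos_of_ne_zero hk),
    ← ZMod.isUnit_iff_coprime, ZMod.natCast_zmod_val]

lemma card_units_eq_ncard_setOf_isUnit (M : Type*) [Monoid M] :
    Nat.card Mˣ = {x : M | IsUnit x}.ncard := by
  rw [← Nat.card_range_of_injective Units.val_injective]
  rfl

namespace GaussianInt

variable (n : ℕ)

def reduceMod : GaussianInt →+* QuadraticAlgebra (ZMod n) (-1) 0 :=
  Zsqrtd.lift ⟨ω, by ext <;> simp [omega_mul_omega_eq_mk]⟩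

variable {n}

@[simp]
lemma re_reduceMod (θ : GaussianInt) : (reduceMod n θ).re = θ.re := by
  simp [reduceMod]

@[simp]
lemma im_reduceMod (θ : GaussianInt) : (reduceMod n θ).im = θ.im := by
  simp [reduceMod]

lemma norm_reduceMod (θ : GaussianInt) : (reduceMod n θ).norm = (Zsqrtd.norm θ : ZMod n) := by
  simp [QuadraticAlgebra.norm_def, Zsqrtd.norm_def]

lemma reduceMod_surjective : Function.Surjective (reduceMod n) := fun z =>
  ⟨⟨z.re.cast, z.im.cast⟩, by ext <;> simp⟩

lemma ker_reduceMod : RingHom.ker (reduceMod n) = Ideal.span {(n : GaussianInt)} := by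
  ext θ
  rw [RingHom.mem_ker, Ideal.mem_span_singleton, ← Int.cast_natCast, Zsqrtd.intCast_dvd,
    QuadraticAlgebra.ext_iff]
  simp [ZMod.intCast_zmod_eq_zero_iff_dvd]

variable (n) in
noncomputable def quotientSpanNatEquiv :
    GaussianInt ⧸ Ideal.span {(n : GaussianInt)} ≃+* QuadraticAlgebra (ZMod n) (-1) 0 :=
  (Ideal.quotEquivOfEq ker_reduceMod.symm).trans
    (RingHom.quotientKerEquivOfSurjective reduceMod_surjective)

lemma ncard_setOf_exists_mk (P : GaussianInt → Prop)
    (p : QuadraticAlgebra (ZMod n) (-1) 0 → Prop) (hP : ∀ θ, P θ ↔ p (reduceMod n θ)) :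
    {x : GaussianInt ⧸ Ideal.span {(n : GaussianInt)} |
        ∃ θ, Ideal.Quotient.mk _ θ = x ∧ P θ}.ncard = {z | p z}.ncard := by
  rw [← Set.ncard_image_of_injective _ (quotientSpanNatEquiv n).injective]
  congr 1
  ext z
  simp only [Set.mem_image, Set.mem_ofPred_eq]
  constructor
  · rintro ⟨_, ⟨θ, rfl, hθ⟩, rfl⟩
    exact (hP θ).1 hθ
  · intro hz
    obtain ⟨θ, rfl⟩ := reduceMod_surjective z
    exact ⟨_, ⟨θ, rfl, (hP θ).2 hz⟩, rfl⟩

end GaussianInt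

lemma isPrimaryGI_iff (θ : GaussianInt) :
    IsPrimaryGI θ ↔ θ.im % 2 = 0 ∧ (θ.re + θ.im) % 4 = 1 := by
  have h : (2 + 2 * gi : GaussianInt) = ⟨2, 2⟩ := by ext <;> simp [gi]
  rw [IsPrimaryGI, h]
  constructor
  · rintro ⟨c, hc⟩
    have hre := congrArg Zsqrtd.re hc
    have him := congrArg Zsqrtd.im hc
    simp only [Zsqrtd.re_sub, Zsqrtd.re_one, Zsqrtd.re_mul, Zsqrtd.im_sub, Zsqrtd.im_one,
      Zsqrtd.im_mul] at hre him
    omega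
  · rintro ⟨h2, h4⟩
    refine ⟨⟨(θ.re - 1 + θ.im) / 4, (θ.im - θ.re + 1) / 4⟩, ?_⟩
    ext <;> simp <;> omega

lemma gi_pow_eq_one_iff {k : ℕ} (hk : k < 4) : gi ^ k = 1 ↔ k = 0 := by
  interval_cases k <;> decide

lemma gi_pow_eq_neg_one_iff {k : ℕ} (hk : k < 4) : gi ^ k = -1 ↔ k = 2 := by
  interval_cases k <;> decide

lemma chi2_eq_one_iff (θ : GaussianInt) : chi2 θ = 1 ↔ θ.im / 2 % 4 = 0 := by
  rw [chi2, gi_pow_eq_one_iff (by omega)]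
  omega

lemma chi2_eq_neg_one_iff (θ : GaussianInt) : chi2 θ = -1 ↔ θ.im / 2 % 4 = 2 := by
  rw [chi2, gi_pow_eq_neg_one_iff (by omega)]
  omega

/-- For `z = θ mod 16`, `j` stands for `im θ / 2 mod 4`, so that `(2/θ)₄ = i^(-j)`. -/
def IsPrimaryResidue (α : ZMod 16) (j : ℕ) (z : QuadraticAlgebra (ZMod 16) (-1) 0) : Prop :=
  z.im.val % 2 = 0 ∧ (z.re.val + z.im.val) % 4 = 1 ∧ z.norm = α ∧ z.im.val / 2 % 4 = j

instance (α : ZMod 16) (j : ℕ) : DecidablePred (IsPrimaryResidue α j) := fun _ =>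
  inferInstanceAs (Decidable (_ ∧ _))

lemma isPrimaryResidue_reduceMod_iff (θ : GaussianInt) {α : ℤ} (h0 : 0 ≤ α) (h16 : α < 16)
    (j : ℕ) : IsPrimaryResidue α j (GaussianInt.reduceMod 16 θ) ↔
      IsPrimaryGI θ ∧ Zsqrtd.norm θ % 16 = α ∧ θ.im / 2 % 4 = j := by
  have hre := ZMod.val_intCast (n := 16) θ.re
  have him := ZMod.val_intCast (n := 16) θ.im
  rw [IsPrimaryResidue, isPrimaryGI_iff, GaussianInt.norm_reduceMod, GaussianInt.re_reduceMod,
    GaussianInt.im_reduceMod, ZMod.intCast_eq_intCast_iff']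
  push_cast at hre him ⊢
  omega

lemma ncard_primaryClasses {α : ℤ} (h0 : 0 ≤ α) (h16 : α < 16) {v : GaussianInt} {j : ℕ}
    (hv : ∀ θ, chi2 θ = v ↔ θ.im / 2 % 4 = j) :
    {x : GaussianInt ⧸ Ideal.span {(16 : GaussianInt)} | ∃ θ, Ideal.Quotient.mk _ θ = x ∧
        IsPrimaryGI θ ∧ Zsqrtd.norm θ % 16 = α ∧ chi2 θ = v}.ncard =
      {z | IsPrimaryResidue α j z}.ncard := by
  rw [← Nat.cast_ofNat (R := GaussianInt) (n := 16)]
  refine GaussianInt.ncard_setOf_exists_mk _ _ fun θ => ?_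
  rw [hv θ, isPrimaryResidue_reduceMod_iff θ h0 h16]

lemma ncard_isPrimaryResidue_one_two : {z | IsPrimaryResidue 1 2 z}.ncard = 4 := by
  rw [Set.ncard_eq_toFinset_card', Set.toFinset_ofPred]
  decide

lemma ncard_isPrimaryResidue_nine_zero : {z | IsPrimaryResidue 9 0 z}.ncard = 4 := by
  rw [Set.ncard_eq_toFinset_card', Set.toFinset_ofPred]
  decide

set_option maxRecDepth 2000 in
lemma card_units_quotient_span_sixteen :
    Nat.card (GaussianInt ⧸ Ideal.span {(16 : GaussianInt)})ˣ = 128 := by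
  have hunit : {z : QuadraticAlgebra (ZMod 16) (-1) 0 | IsUnit z} = {z | Odd z.norm.val} :=
    Set.ext fun z => isUnit_iff_norm_isUnit.trans (ZMod.isUnit_iff_odd_val (k := 4) four_ne_zero _)
  rw [← Nat.cast_ofNat (R := GaussianInt) (n := 16),
    Nat.card_congr (Units.mapEquiv (GaussianInt.quotientSpanNatEquiv 16).toMulEquiv).toEquiv,
    card_units_eq_ncard_setOf_isUnit, hunit, Set.ncard_eq_toFinset_card', Set.toFinset_ofPred]
  decide

/-- For α₁ ∈ {1, 9}, the set A₁₆ of primary classes a mod 16 with N(a) ≡ α₁ (mod 16)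
and (2/a)₄ = (-1)^((α₁-9)/8) has cardinality φ(16)/2⁵, where
φ(16) = #(ℤ[i]/16ℤ[i])^×. -/
theorem stmt6 (α₁ : ℤ) (hα : α₁ = 1 ∨ α₁ = 9) :
    Set.ncard {x : GaussianInt ⧸ Ideal.span {(16 : GaussianInt)} |
        ∃ θ : GaussianInt, Ideal.Quotient.mk (Ideal.span {(16 : GaussianInt)}) θ = x ∧
          IsPrimaryGI θ ∧ Zsqrtd.norm θ % 16 = α₁ ∧
          chi2 θ = (-1) ^ ((((α₁ - 9) / 8) % 2).toNat)} =
      Nat.card (GaussianInt ⧸ Ideal.span {(16 : GaussianInt)})ˣ / 2 ^ 5 := by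
  rw [card_units_quotient_span_sixteen]
  rcases hα with rfl | rfl
  · rw [show ((-1 : GaussianInt) ^ (((1 - 9) / 8 % 2 : ℤ).toNat)) = -1 by norm_num,
      ncard_primaryClasses (by norm_num) (by norm_num) chi2_eq_neg_one_iff]
    exact ncard_isPrimaryResidue_one_two
  · rw [show ((-1 : GaussianInt) ^ (((9 - 9) / 8 % 2 : ℤ).toNat)) = 1 by norm_num,
      ncard_primaryClasses (by norm_num) (by norm_num) chi2_eq_one_iff]
    exact ncard_isPrimaryResidue_nine_zero
end

section
/- The number of k×k symmetric matrices over 𝔽₂ of rank r (with 0 ≤ r ≤ k) is #{B ∈ Sym_k(𝔽₂) : rank B = r} = 2^{r(r+1)/2} u_{r+1} ∏_{i=0}^{k-r-1} (2^k - 2^i)/(2^{k-r} - 2^i), where u_m = ∏_{i=1}^{⌊m/2⌋} (1 - 2^{1-2i}). -/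
/-- u_m = ∏_{i=1}^{⌊m/2⌋} (1 - 2^{1-2i}), as a rational number. -/
def uSeq (m : ℕ) : ℚ := ∏ i ∈ Finset.Icc 1 (m / 2), (1 - (2 : ℚ) ^ ((1 : ℤ) - 2 * (i : ℤ)))

namespace Stmt8Aux

open Finset

/-- ∏_{j=1}^n (2^j - 1) -/
def Qf (n : ℕ) : ℚ := ∏ j ∈ Finset.Icc 1 n, ((2:ℚ) ^ j - 1)

/-- Gaussian binomial as a ratio of products. -/
def Gq (k d : ℕ) : ℚ := ∏ i ∈ Finset.range d, (((2:ℚ) ^ k - 2 ^ i) / ((2:ℚ) ^ d - 2 ^ i))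

/-- conjectured count of invertible symmetric m×m matrices over 𝔽₂, as a rational. -/
def cc (m : ℕ) : ℚ := 2 ^ (m * (m + 1) / 2) * uSeq (m + 1)

lemma Qf_pos (n : ℕ) : 0 < Qf n := by
  apply Finset.prod_pos
  intro j hj
  have h1 : 1 ≤ j := (Finset.mem_Icc.mp hj).1
  have : (2:ℚ) ^ 1 ≤ 2 ^ j := pow_le_pow_right₀ (by norm_num) h1
  simp only [pow_one] at this
  linarith

lemma Qf_ne_zero (n : ℕ) : Qf n ≠ 0 := (Qf_pos n).ne'

lemma Qf_succ (n : ℕ) : Qf (n + 1) = Qf n * ((2:ℚ) ^ (n+1) - 1) := by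
  rw [Qf, Qf, ← Finset.prod_Icc_succ_top (by omega : 1 ≤ n + 1)]

lemma two_pow_sub_ne_zero {i d : ℕ} (h : i < d) : (2:ℚ) ^ d - 2 ^ i ≠ 0 := by
  have : (2:ℚ) ^ i < 2 ^ d := by
    apply pow_lt_pow_right₀ (by norm_num) h
  linarith

/-- numerator product -/
def prodA (k r : ℕ) : ℚ := ∏ i ∈ Finset.range r, ((2:ℚ) ^ k - 2 ^ i)

lemma prodA_key : ∀ (b a : ℕ), prodA (a + b) b * Qf a = (∏ i ∈ Finset.range b, (2:ℚ) ^ i) * Qf (a + b) := by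
  intro b
  induction b with
  | zero => intro a; simp [prodA]
  | succ b ih =>
    intro a
    have h1 : prodA (a + (b+1)) (b+1) = prodA (a + b + 1) b * ((2:ℚ) ^ (a+b+1) - 2 ^ b) := by
      rw [prodA, Finset.prod_range_succ, ← prodA]
      ring_nf
    have h2 : (2:ℚ) ^ (a+b+1) - 2 ^ b = 2 ^ b * ((2:ℚ) ^ (a+1) - 1) := by
      rw [mul_sub, mul_one, ← pow_add]
      congr 2
      omega
    have h3 := ih (a + 1)
    have h4 : Qf (a+1) = Qf a * ((2:ℚ) ^ (a+1) - 1) := Qf_succ a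
    have h5 : a + 1 + b = a + (b + 1) := by omega
    rw [h5] at h3
    calc prodA (a + (b+1)) (b+1) * Qf a
        = prodA (a + b + 1) b * ((2:ℚ) ^ (a+b+1) - 2 ^ b) * Qf a := by rw [h1]
      _ = prodA (a + (b+1)) b * (Qf a * ((2:ℚ)^(a+1) - 1)) * 2 ^ b := by
          rw [h2]; ring_nf
      _ = prodA (a + (b+1)) b * Qf (a+1) * 2 ^ b := by rw [h4]
      _ = (∏ i ∈ Finset.range b, (2:ℚ) ^ i) * Qf (a + (b+1)) * 2 ^ b := by rw [h3]
      _ = (∏ i ∈ Finset.range (b+1), (2:ℚ) ^ i) * Qf (a + (b+1)) := by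
          rw [Finset.prod_range_succ]; ring

lemma prodA_eq {k r : ℕ} (hr : r ≤ k) :
    prodA k r = (∏ i ∈ Finset.range r, (2:ℚ) ^ i) * Qf k / Qf (k - r) := by
  have := prodA_key r (k - r)
  rw [Nat.sub_add_cancel hr] at this
  field_simp [Qf_ne_zero]
  linarith [this]

lemma Gq_eq {k r : ℕ} (hr : r ≤ k) : Gq k r = Qf k / (Qf r * Qf (k - r)) := by
  have hB : (∏ i ∈ Finset.range r, ((2:ℚ) ^ r - 2 ^ i)) = prodA r r := rfl
  have h1 : Gq k r = prodA k r / prodA r r := by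
    rw [Gq, Finset.prod_div_distrib, prodA, hB]
  have h2 := prodA_eq hr
  have h3 : prodA r r = (∏ i ∈ Finset.range r, (2:ℚ) ^ i) * Qf r := by
    have := prodA_key r 0
    simpa [Qf] using this
  have hp : (∏ i ∈ Finset.range r, (2:ℚ) ^ i) ≠ 0 := by
    apply Finset.prod_ne_zero_iff.mpr
    intro i _
    positivity
  rw [h1, h2, h3]
  field_simp [Qf_ne_zero, hp]

lemma Gq_symm {k r : ℕ} (hr : r ≤ k) : Gq k r = Gq k (k - r) := by
  rw [Gq_eq hr, Gq_eq (Nat.sub_le k r), Nat.sub_sub_self hr, mul_comm]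

lemma Gq_self (k : ℕ) : Gq k k = 1 := by
  rw [Gq_eq le_rfl, Nat.sub_self]
  have : Qf 0 = 1 := by simp [Qf]
  rw [this, mul_one, div_self (Qf_ne_zero k)]

lemma Gq_zero (k : ℕ) : Gq k 0 = 1 := by simp [Gq]

lemma Gq_top_succ (n : ℕ) : Gq n (n + 1) = 0 := by
  rw [Gq]
  apply Finset.prod_eq_zero (Finset.self_mem_range_succ n)
  rw [sub_self, zero_div]

lemma Gq_pascal {n d : ℕ} (hd : d ≤ n) :
    Gq (n+1) (d+1) = Gq n d + 2 ^ (d+1) * Gq n (d+1) := by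
  rcases eq_or_lt_of_le hd with rfl | hlt
  · rw [Gq_self, Gq_self, Gq_top_succ]; ring
  · have hd1 : d + 1 ≤ n := hlt
    rw [Gq_eq (by omega : d + 1 ≤ n + 1), Gq_eq (by omega : d ≤ n), Gq_eq hd1]
    have e1 : n + 1 - (d + 1) = n - d := by omega
    have e2 : n - (d + 1) = n - d - 1 := by omega
    rw [e1, e2]
    have h1 : Qf (n+1) = Qf n * ((2:ℚ) ^ (n+1) - 1) := Qf_succ n
    have h2 : Qf (d+1) = Qf d * ((2:ℚ) ^ (d+1) - 1) := Qf_succ d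
    have h3 : Qf (n - d) = Qf (n - d - 1) * ((2:ℚ) ^ (n - d) - 1) := by
      have : n - d = (n - d - 1) + 1 := by omega
      rw [this, Qf_succ]
      rw [← this]
    have hpow : (2:ℚ) ^ (d+1) * 2 ^ (n - d) = 2 ^ (n+1) := by
      rw [← pow_add]; congr 1; omega
    rw [h1, ← hpow, h2, h3]
    have hx : (2:ℚ) ^ (d+1) - 1 ≠ 0 := by
      have : (2:ℚ) ^ 0 < 2 ^ (d+1) := by apply pow_lt_pow_right₀ (by norm_num) (by omega)
      simp only [pow_zero] at this; linarith
    have hy : (2:ℚ) ^ (n-d) - 1 ≠ 0 := by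
      have : (2:ℚ) ^ 0 < 2 ^ (n-d) := by apply pow_lt_pow_right₀ (by norm_num) (by omega)
      simp only [pow_zero] at this; linarith
    field_simp [Qf_ne_zero]
    ring

lemma Gq_ratio {n d : ℕ} (hd : d + 1 ≤ n) :
    ((2:ℚ) ^ (d+1) - 1) * Gq n (d+1) = ((2:ℚ) ^ (n-d) - 1) * Gq n d := by
  rw [Gq_eq hd, Gq_eq (by omega : d ≤ n)]
  have e2 : n - (d + 1) = n - d - 1 := by omega
  rw [e2]
  have h2 : Qf (d+1) = Qf d * ((2:ℚ) ^ (d+1) - 1) := Qf_succ d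
  have h3 : Qf (n - d) = Qf (n - d - 1) * ((2:ℚ) ^ (n - d) - 1) := by
    have : n - d = (n - d - 1) + 1 := by omega
    rw [this, Qf_succ, ← this]
  rw [h2, h3]
  have hx : (2:ℚ) ^ (d+1) - 1 ≠ 0 := by
    have : (2:ℚ) ^ 0 < 2 ^ (d+1) := by apply pow_lt_pow_right₀ (by norm_num) (by omega)
    simp only [pow_zero] at this; linarith
  have hy : (2:ℚ) ^ (n-d) - 1 ≠ 0 := by
    have : (2:ℚ) ^ 0 < 2 ^ (n-d) := by apply pow_lt_pow_right₀ (by norm_num) (by omega)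
    simp only [pow_zero] at this; linarith
  field_simp [Qf_ne_zero]

lemma tri_succ (m : ℕ) : (m+1)*(m+2)/2 = m*(m+1)/2 + (m+1) := by
  have h : (m+1)*(m+2) = m*(m+1) + (m+1)*2 := by ring
  rw [h, Nat.add_mul_div_right _ _ (by norm_num : 0 < 2)]

lemma cc_zero : cc 0 = 1 := by simp [cc, uSeq]

lemma pow_mul_zpow_neg (m : ℕ) : (2:ℚ) ^ m * (2:ℚ) ^ (-(m:ℤ)) = 1 := by
  rw [← zpow_natCast (2:ℚ) m, ← zpow_add₀ (by norm_num : (2:ℚ) ≠ 0)]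
  simp

lemma cc_succ_even (m : ℕ) (hm : Even m) : cc (m+1) = ((2:ℚ) ^ (m+1) - 1) * cc m := by
  obtain ⟨t, ht⟩ := hm
  have h2 : (m+1)/2 = t := by omega
  have h3 : (m+2)/2 = t + 1 := by omega
  have hexp : (1:ℤ) - 2*((t+1:ℕ):ℤ) = -(((m+1:ℕ)):ℤ) := by push_cast; omega
  have hu2 : uSeq (m+2) = uSeq (m+1) * (1 - (2:ℚ) ^ (-(((m+1:ℕ)):ℤ))) := by
    rw [uSeq, uSeq, h2, h3, Finset.prod_Icc_succ_top (by omega : 1 ≤ t + 1), hexp]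
  have htri : (m+1)*(m+2)/2 = m*(m+1)/2 + (m+1) := tri_succ m
  rw [cc, cc, htri, pow_add, hu2]
  have hkey : (2:ℚ) ^ (m+1) * (1 - (2:ℚ) ^ (-(((m+1:ℕ)):ℤ))) = (2:ℚ) ^ (m+1) - 1 := by
    rw [mul_sub, mul_one, pow_mul_zpow_neg]
  calc (2:ℚ) ^ (m*(m+1)/2) * 2 ^ (m+1) * (uSeq (m+1) * (1 - (2:ℚ) ^ (-(((m+1:ℕ)):ℤ))))
      = ((2:ℚ) ^ (m+1) * (1 - (2:ℚ) ^ (-(((m+1:ℕ)):ℤ)))) * (2 ^ (m*(m+1)/2) * uSeq (m+1)) := by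
        ring
    _ = ((2:ℚ) ^ (m+1) - 1) * cc m := by rw [hkey, cc]

lemma cc_succ_odd (m : ℕ) (hm : Odd m) : cc (m+1) = (2:ℚ) ^ (m+1) * cc m := by
  obtain ⟨t, ht⟩ := hm
  have h2 : (m+1)/2 = t + 1 := by omega
  have h3 : (m+2)/2 = t + 1 := by omega
  have hu2 : uSeq (m+2) = uSeq (m+1) := by rw [uSeq, uSeq, h2, h3]
  rw [cc, cc, tri_succ m, pow_add, hu2]
  ring

lemma key_pair {n e : ℕ} (he : e < n) (hev : Even (n - e - 1)) :
    ((2:ℚ) ^ (e+1) - 1) * (Gq n (e+1) * cc (n - (e+1))) = Gq n e * cc (n - e) := by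
  obtain ⟨m, hm⟩ : ∃ m, n - e = m + 1 := ⟨n - e - 1, by omega⟩
  have h1 : n - (e+1) = m := by omega
  have hev' : Even m := by rwa [show n - e - 1 = m from by omega] at hev
  rw [h1, hm, cc_succ_even m hev']
  have hr := Gq_ratio (show e + 1 ≤ n from he)
  rw [hm] at hr
  linear_combination (cc m) * hr

lemma W_eq_S (n : ℕ) :
    (∑ d ∈ Finset.range (n+1), if Even (n - d) then (2:ℚ) ^ d * (Gq n d * cc (n - d)) else 0)
      = ∑ d ∈ Finset.range (n+1), Gq n d * cc (n - d) := by
  have split : ∀ d ∈ Finset.range (n+1),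
      (if Even (n - d) then (2:ℚ) ^ d * (Gq n d * cc (n - d)) else 0)
        = (if Even (n - d) then Gq n d * cc (n - d) else 0)
          + (if Even (n - d) then ((2:ℚ) ^ d - 1) * (Gq n d * cc (n - d)) else 0) := by
    intro d _
    split
    · ring
    · simp
  rw [Finset.sum_congr rfl split, Finset.sum_add_distrib]
  have hB : (∑ d ∈ Finset.range (n+1),
        if Even (n - d) then ((2:ℚ) ^ d - 1) * (Gq n d * cc (n - d)) else 0)
      = ∑ d ∈ Finset.range (n+1), if ¬ Even (n - d) then Gq n d * cc (n - d) else 0 := by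
    rw [Finset.sum_range_succ'
      (fun d => if Even (n - d) then ((2:ℚ) ^ d - 1) * (Gq n d * cc (n - d)) else 0) n]
    have h0 : (if Even (n - 0) then ((2:ℚ) ^ 0 - 1) * (Gq n 0 * cc (n - 0)) else 0) = 0 := by
      split <;> simp
    rw [h0, add_zero,
      Finset.sum_range_succ (fun d => if ¬ Even (n - d) then Gq n d * cc (n - d) else 0) n]
    have hlast : (if ¬ Even (n - n) then Gq n n * cc (n - n) else 0) = 0 := by simp
    rw [hlast, add_zero]
    apply Finset.sum_congr rfl
    intro e he
    have he' : e < n := Finset.mem_range.mp he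
    have hpar : Even (n - (e+1)) ↔ ¬ Even (n - e) := by
      rw [Nat.even_sub (by omega : e + 1 ≤ n), Nat.even_sub (by omega : e ≤ n),
        Nat.even_add_one]
      tauto
    by_cases hc : Even (n - (e+1))
    · rw [if_pos hc, if_pos (hpar.mp hc)]
      exact key_pair he' (by rwa [show n - e - 1 = n - (e+1) from by omega])
    · rw [if_neg hc, if_neg fun h => hc (hpar.mpr h)]
  rw [hB, ← Finset.sum_add_distrib]
  apply Finset.sum_congr rfl
  intro d _
  by_cases hc : Even (n - d)
  · rw [if_pos hc, if_neg (not_not_intro hc), add_zero]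
  · rw [if_neg hc, if_pos hc, zero_add]

theorem S_val (n : ℕ) :
    (∑ d ∈ Finset.range (n+1), Gq n d * cc (n - d)) = 2 ^ (n*(n+1)/2) := by
  induction n with
  | zero => simp [Gq, cc_zero]
  | succ n ih =>
    rw [Finset.sum_range_succ' (fun d => Gq (n+1) d * cc (n+1-d)) (n+1)]
    have hstep : ∀ d ∈ Finset.range (n+1), Gq (n+1) (d+1) * cc (n+1-(d+1))
        = Gq n d * cc (n-d) + 2 ^ (d+1) * Gq n (d+1) * cc (n - d) := by
      intro d hd
      have hd' : d ≤ n := by have := Finset.mem_range.mp hd; omega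
      rw [show n+1-(d+1) = n - d from by omega, Gq_pascal hd']
      ring
    rw [Finset.sum_congr rfl hstep, Finset.sum_add_distrib, ih]
    have hM : (∑ d ∈ Finset.range (n+1), (2:ℚ) ^ (d+1) * Gq n (d+1) * cc (n - d))
          + Gq (n+1) 0 * cc (n+1-0)
        = ∑ D ∈ Finset.range (n+2), (2:ℚ) ^ D * Gq n D * cc (n+1-D) := by
      rw [Finset.sum_range_succ' (fun D => (2:ℚ) ^ D * Gq n D * cc (n+1-D)) (n+1)]
      congr 1
      · apply Finset.sum_congr rfl
        intro d hd
        rw [show n+1-(d+1) = n-d from by omega]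
      · simp [Gq_zero]
    have hdrop : (∑ D ∈ Finset.range (n+2), (2:ℚ) ^ D * Gq n D * cc (n+1-D))
        = ∑ D ∈ Finset.range (n+1), (2:ℚ) ^ D * Gq n D * cc (n+1-D) := by
      rw [Finset.sum_range_succ, Gq_top_succ]
      simp
    have hsplit : ∀ D ∈ Finset.range (n+1), (2:ℚ) ^ D * Gq n D * cc (n+1-D)
        = 2 ^ (n+1) * (Gq n D * cc (n-D))
          - (if Even (n-D) then (2:ℚ) ^ D * (Gq n D * cc (n-D)) else 0) := by
      intro D hD
      have hD' : D ≤ n := by have := Finset.mem_range.mp hD; omega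
      have hcc : n+1-D = (n-D)+1 := by omega
      have hp : (2:ℚ) ^ D * 2 ^ ((n-D)+1) = 2 ^ (n+1) := by
        rw [← pow_add]
        congr 1
        omega
      rw [hcc]
      by_cases hev : Even (n-D)
      · rw [cc_succ_even _ hev, if_pos hev, ← hp]
        ring
      · rw [cc_succ_odd _ (Nat.not_even_iff_odd.mp hev), if_neg hev, ← hp]
        ring
    rw [add_assoc, hM, hdrop, Finset.sum_congr rfl hsplit, Finset.sum_sub_distrib,
      ← Finset.mul_sum, W_eq_S, ih]
    rw [show (n+1)*(n+2)/2 = n*(n+1)/2 + (n+1) from tri_succ n, pow_add]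
    ring

end Stmt8Aux


open Matrix

namespace Stmt8Aux

noncomputable section

abbrev F := ZMod 2

lemma rank_of_injective {k r : ℕ} (P : Matrix (Fin k) (Fin r) F)
    (hP : Function.Injective P.mulVecLin) : P.rank = r := by
  rw [Matrix.rank, LinearMap.finrank_range_of_inj hP, Module.finrank_fintype_fun_eq_card,
    Fintype.card_fin]

lemma rank_mul_of_injective {a b c : ℕ} (M : Matrix (Fin a) (Fin b) F)
    (N : Matrix (Fin b) (Fin c) F) (hM : Function.Injective M.mulVecLin) :
    (M * N).rank = N.rank := by
  rw [Matrix.rank, Matrix.rank, mulVecLin_mul, LinearMap.range_comp]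
  exact ((Submodule.equivMapOfInjective _ hM _).finrank_eq).symm

lemma injective_of_isUnit {n : ℕ} {S : Matrix (Fin n) (Fin n) F} (h : IsUnit S) :
    Function.Injective S.mulVecLin := by
  rw [coe_mulVecLin]; exact mulVec_injective_iff_isUnit.mpr h

lemma isUnit_of_rank_eq {n : ℕ} {S : Matrix (Fin n) (Fin n) F} (h : S.rank = n) : IsUnit S := by
  rw [← mulVec_injective_iff_isUnit, ← coe_mulVecLin]
  rw [LinearMap.injective_iff_surjective, ← LinearMap.range_eq_top]
  apply Submodule.eq_top_of_finrank_eq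
  rw [Module.finrank_fintype_fun_eq_card, Fintype.card_fin]
  exact h

lemma matrix_eq_of_mulVec {a b : ℕ} {M N : Matrix (Fin a) (Fin b) F}
    (h : ∀ x, M *ᵥ x = N *ᵥ x) : M = N := by
  have : Matrix.toLin' M = Matrix.toLin' N := by
    apply LinearMap.ext; intro x; rw [toLin'_apply, toLin'_apply, h]
  exact Matrix.toLin'.injective this

lemma factor_through {a b c : ℕ} (P₀ : Matrix (Fin a) (Fin b) F) (Q₀ : Matrix (Fin b) (Fin a) F)
    (hQ : Q₀ * P₀ = 1) (M : Matrix (Fin a) (Fin c) F)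
    (h : LinearMap.range M.mulVecLin ≤ LinearMap.range P₀.mulVecLin) : P₀ * (Q₀ * M) = M := by
  apply matrix_eq_of_mulVec; intro x
  obtain ⟨y, hy⟩ := h ⟨x, rfl⟩
  simp only [mulVecLin_apply] at hy
  calc (P₀ * (Q₀ * M)) *ᵥ x = P₀ *ᵥ (Q₀ *ᵥ (M *ᵥ x)) := by
        simp only [mulVec_mulVec, Matrix.mul_assoc]
    _ = P₀ *ᵥ (Q₀ *ᵥ (P₀ *ᵥ y)) := by rw [hy]
    _ = (P₀ * (Q₀ * P₀)) *ᵥ y := by simp only [mulVec_mulVec]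
    _ = M *ᵥ x := by rw [hQ, Matrix.mul_one, hy]

lemma conj_mul {a b c : ℕ} (A : Matrix (Fin a) (Fin b) F) (B : Matrix (Fin b) (Fin c) F)
    (S : Matrix (Fin c) (Fin c) F) : A * (B * S * Bᵀ) * Aᵀ = (A * B) * S * (A * B)ᵀ := by
  simp only [Matrix.transpose_mul, Matrix.mul_assoc]

lemma isSymm_conj {a b : ℕ} (A : Matrix (Fin a) (Fin b) F) {S : Matrix (Fin b) (Fin b) F}
    (hS : S.IsSymm) : (A * S * Aᵀ).IsSymm := by
  rw [Matrix.IsSymm, transpose_mul, transpose_mul, transpose_transpose, hS.eq, Matrix.mul_assoc]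

lemma rank_PSPt {k r : ℕ} (P : Matrix (Fin k) (Fin r) F) (S : Matrix (Fin r) (Fin r) F)
    (hP : Function.Injective P.mulVecLin) (hS : IsUnit S) : (P * S * Pᵀ).rank = r := by
  rw [Matrix.mul_assoc, rank_mul_of_injective _ _ hP,
    rank_mul_eq_right_of_isUnit_det S Pᵀ ((isUnit_iff_isUnit_det S).mp hS),
    rank_transpose, rank_of_injective P hP]

lemma range_le_of_PSPt {k r : ℕ} (P : Matrix (Fin k) (Fin r) F) (S : Matrix (Fin r) (Fin r) F) :
    LinearMap.range (P * S * Pᵀ).mulVecLin ≤ LinearMap.range P.mulVecLin := by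
  rw [Matrix.mul_assoc, mulVecLin_mul]
  exact LinearMap.range_comp_le_range _ _

lemma range_eq_of_PSPt {k r : ℕ} (P : Matrix (Fin k) (Fin r) F) (S : Matrix (Fin r) (Fin r) F)
    (hP : Function.Injective P.mulVecLin) (hS : IsUnit S) :
    LinearMap.range (P * S * Pᵀ).mulVecLin = LinearMap.range P.mulVecLin := by
  apply Submodule.eq_of_le_of_finrank_eq (range_le_of_PSPt P S)
  have h1 : Module.finrank F (LinearMap.range (P * S * Pᵀ).mulVecLin) = r := rank_PSPt P S hP hS
  have h2 : Module.finrank F (LinearMap.range P.mulVecLin) = r := rank_of_injective P hP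
  rw [h1, h2]

lemma exists_decomp {k r : ℕ} (B : Matrix (Fin k) (Fin k) F) (hsym : B.IsSymm)
    (hrank : B.rank = r) :
    ∃ t : Matrix (Fin k) (Fin r) F × Matrix (Fin r) (Fin r) F × Matrix (Fin r) (Fin k) F,
      Function.Injective t.1.mulVecLin ∧ t.2.1.IsSymm ∧ IsUnit t.2.1 ∧ t.2.2 * t.1 = 1 ∧
        t.1 * t.2.1 * t.1ᵀ = B := by
  classical
  have hfr : Module.finrank F (LinearMap.range B.mulVecLin) = r := hrank
  let b : Module.Basis (Fin r) F (LinearMap.range B.mulVecLin) := Module.finBasisOfFinrankEq F _ hfr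
  set P : Matrix (Fin k) (Fin r) F := (Matrix.of fun j i => (b j : Fin k → F) i)ᵀ with hP
  have hli : LinearIndependent F fun j => Pᵀ j := by
    have := b.linearIndependent.map' (Submodule.subtype _) (Submodule.ker_subtype _)
    exact this
  have hPinj : Function.Injective P.mulVecLin := by
    rw [coe_mulVecLin]; exact mulVec_injective_iff.mpr hli
  have hrange : LinearMap.range P.mulVecLin = LinearMap.range B.mulVecLin := by
    rw [range_mulVecLin]
    change Submodule.span F (Set.range Pᵀ) = _
    have hr2 : Set.range Pᵀ = (Submodule.subtype (LinearMap.range B.mulVecLin)) '' Set.range b := by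
      rw [← Set.range_comp]; rfl
    rw [hr2, Submodule.span_image, b.span_eq, Submodule.map_top, Submodule.range_subtype]
  obtain ⟨Q', hQ'⟩ := LinearMap.exists_leftInverse_of_injective P.mulVecLin
    (LinearMap.ker_eq_bot.mpr hPinj)
  set Q : Matrix (Fin r) (Fin k) F := LinearMap.toMatrix' Q' with hQdef
  have hQ : Q * P = 1 := by
    apply Matrix.toLin'.injective
    apply LinearMap.ext; intro x
    have h1 : Matrix.toLin' Q = Q' := by rw [hQdef, Matrix.toLin'_toMatrix']
    rw [Matrix.toLin'_apply', Matrix.toLin'_apply', mulVecLin_mul, mulVecLin_one]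
    have h2 : Q.mulVecLin = Q' := by rw [← Matrix.toLin'_apply', h1]
    have h3 : P.mulVecLin = Matrix.toLin' P := (Matrix.toLin'_apply' P).symm
    calc (Q.mulVecLin ∘ₗ P.mulVecLin) x = (Q' ∘ₗ P.mulVecLin) x := by rw [h2]
      _ = LinearMap.id x := by rw [hQ']
      _ = LinearMap.id (R := F) (M := Fin r → F) x := rfl
  have hPQB : P * (Q * B) = B := factor_through P Q hQ B hrange.symm.le
  have h3 : (P * Q) * B = B := by rw [Matrix.mul_assoc]; exact hPQB
  have hmain : P * (Q * B * Qᵀ) * Pᵀ = B := by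
    calc P * (Q * B * Qᵀ) * Pᵀ = (P * Q) * B * (P * Q)ᵀ := conj_mul P Q B
      _ = B * (P * Q)ᵀ := by rw [h3]
      _ = ((P * Q) * Bᵀ)ᵀ := by simp [transpose_mul, Matrix.mul_assoc]
      _ = ((P * Q) * B)ᵀ := by rw [hsym.eq]
      _ = Bᵀ := by rw [h3]
      _ = B := hsym.eq
  have hSrank : (Q * B * Qᵀ).rank = r := by
    apply le_antisymm
    · exact le_trans ((Q * B * Qᵀ).rank_le_card_width) (le_of_eq (Fintype.card_fin r))
    · calc r = B.rank := hrank.symm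
        _ = (P * (Q * B * Qᵀ) * Pᵀ).rank := by rw [hmain]
        _ ≤ (P * (Q * B * Qᵀ)).rank := rank_mul_le_left _ _
        _ ≤ (Q * B * Qᵀ).rank := rank_mul_le_right _ _
  exact ⟨⟨P, Q * B * Qᵀ, Q⟩, hPinj, isSymm_conj Q hsym, isUnit_of_rank_eq hSrank, hQ, hmain⟩

lemma fiber_core {k r : ℕ} (P₀ P : Matrix (Fin k) (Fin r) F) (Q₀ : Matrix (Fin r) (Fin k) F)
    (S₀ S : Matrix (Fin r) (Fin r) F)
    (hP₀ : Function.Injective P₀.mulVecLin) (hQ₀ : Q₀ * P₀ = 1)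
    (hP : Function.Injective P.mulVecLin) (hS₀ : IsUnit S₀) (hS : IsUnit S)
    (heq : P * S * Pᵀ = P₀ * S₀ * P₀ᵀ) :
    IsUnit (Q₀ * P) ∧ P₀ * (Q₀ * P) = P ∧ (Q₀ * P) * S * (Q₀ * P)ᵀ = S₀ := by
  have hrange : LinearMap.range P.mulVecLin = LinearMap.range P₀.mulVecLin := by
    rw [← range_eq_of_PSPt P S hP hS, heq, range_eq_of_PSPt P₀ S₀ hP₀ hS₀]
  have hfac : P₀ * (Q₀ * P) = P := factor_through P₀ Q₀ hQ₀ P hrange.le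
  have hginj : Function.Injective (Q₀ * P).mulVecLin := by
    have h' : P₀.mulVecLin ∘ₗ (Q₀ * P).mulVecLin = P.mulVecLin := by
      rw [← mulVecLin_mul, hfac]
    have : Function.Injective (⇑P₀.mulVecLin ∘ ⇑(Q₀ * P).mulVecLin) := by
      rw [← LinearMap.coe_comp, h']; exact hP
    exact this.of_comp
  have hgU : IsUnit (Q₀ * P) := by
    rw [← mulVec_injective_iff_isUnit, ← coe_mulVecLin]; exact hginj
  have hcan : ∀ X Y : Matrix (Fin r) (Fin r) F, P₀ * X * P₀ᵀ = P₀ * Y * P₀ᵀ → X = Y := by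
    intro X Y h
    have h1 : X * P₀ᵀ = Y * P₀ᵀ := by
      have := congrArg (fun M => Q₀ * M) h
      simpa only [← Matrix.mul_assoc, hQ₀, Matrix.one_mul] using this
    have h2 : P₀ * Xᵀ = P₀ * Yᵀ := by
      have := congrArg Matrix.transpose h1
      simpa only [transpose_mul, transpose_transpose] using this
    have h3 : Xᵀ = Yᵀ := by
      have := congrArg (fun M => Q₀ * M) h2
      simpa only [← Matrix.mul_assoc, hQ₀, Matrix.one_mul] using this
    have := congrArg Matrix.transpose h3
    simpa only [transpose_transpose] using this
  refine ⟨hgU, hfac, hcan _ _ ?_⟩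
  rw [conj_mul P₀ (Q₀ * P) S, hfac, heq]

lemma cancel_conj {n : ℕ} {g X Y : Matrix (Fin n) (Fin n) F} (hg : IsUnit g)
    (h : g * X * gᵀ = g * Y * gᵀ) : X = Y := by
  obtain ⟨u, rfl⟩ := hg
  have h1 := congrArg
    (fun M => (↑u⁻¹ : Matrix (Fin n) (Fin n) F) * M * (↑u⁻¹ : Matrix (Fin n) (Fin n) F)ᵀ) h
  simp only [conj_mul] at h1
  simpa only [← Units.val_mul, u.inv_mul, Units.val_one, Matrix.one_mul, transpose_one,
    Matrix.mul_one] using h1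

abbrev SymRk (k r : ℕ) := {B : Matrix (Fin k) (Fin k) F // B.IsSymm ∧ B.rank = r}
abbrev InjM (k r : ℕ) := {P : Matrix (Fin k) (Fin r) F // Function.Injective P.mulVecLin}

noncomputable def dec {k r : ℕ} (B : SymRk k r) :
    Matrix (Fin k) (Fin r) F × Matrix (Fin r) (Fin r) F × Matrix (Fin r) (Fin k) F :=
  (exists_decomp B.1 B.2.1 B.2.2).choose

lemma dec_spec {k r : ℕ} (B : SymRk k r) :
    Function.Injective (dec B).1.mulVecLin ∧ (dec B).2.1.IsSymm ∧ IsUnit (dec B).2.1 ∧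
      (dec B).2.2 * (dec B).1 = 1 ∧ (dec B).1 * (dec B).2.1 * (dec B).1ᵀ = B.1 :=
  (exists_decomp B.1 B.2.1 B.2.2).choose_spec

lemma unit_of_symrk {r : ℕ} (S : SymRk r r) : IsUnit S.1 := isUnit_of_rank_eq S.2.2

noncomputable def toFunMain {k r : ℕ} (x : SymRk r r × InjM k r) :
    SymRk k r × (Matrix (Fin r) (Fin r) F)ˣ :=
  let B : SymRk k r := ⟨x.2.1 * x.1.1 * x.2.1ᵀ,
    isSymm_conj x.2.1 x.1.2.1, rank_PSPt x.2.1 x.1.1 x.2.2 (unit_of_symrk x.1)⟩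
  (B, (fiber_core (dec B).1 x.2.1 (dec B).2.2 (dec B).2.1 x.1.1
      (dec_spec B).1 (dec_spec B).2.2.2.1 x.2.2 (dec_spec B).2.2.1 (unit_of_symrk x.1)
      ((dec_spec B).2.2.2.2).symm).1.unit)

lemma toFunMain_fst {k r : ℕ} (x : SymRk r r × InjM k r) :
    (toFunMain x).1.1 = x.2.1 * x.1.1 * x.2.1ᵀ := rfl

lemma toFunMain_snd {k r : ℕ} (x : SymRk r r × InjM k r) :
    ((toFunMain x).2 : Matrix (Fin r) (Fin r) F) = (dec (toFunMain x).1).2.2 * x.2.1 :=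
  IsUnit.unit_spec _

lemma fc_of {k r : ℕ} (x : SymRk r r × InjM k r) :
    IsUnit ((dec (toFunMain x).1).2.2 * x.2.1) ∧
    (dec (toFunMain x).1).1 * ((dec (toFunMain x).1).2.2 * x.2.1) = x.2.1 ∧
    ((dec (toFunMain x).1).2.2 * x.2.1) * x.1.1 * ((dec (toFunMain x).1).2.2 * x.2.1)ᵀ
      = (dec (toFunMain x).1).2.1 :=
  fiber_core (dec (toFunMain x).1).1 x.2.1 (dec (toFunMain x).1).2.2 (dec (toFunMain x).1).2.1
    x.1.1 (dec_spec (toFunMain x).1).1 (dec_spec (toFunMain x).1).2.2.2.1 x.2.2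
    (dec_spec (toFunMain x).1).2.2.1 (unit_of_symrk x.1) ((dec_spec (toFunMain x).1).2.2.2.2).symm

lemma main_bijective (k r : ℕ) : Function.Bijective (toFunMain (k := k) (r := r)) := by
  constructor
  · intro x y h
    have hB : (toFunMain x).1 = (toFunMain y).1 := congrArg Prod.fst h
    have hu : ((toFunMain x).2 : Matrix (Fin r) (Fin r) F) = ((toFunMain y).2 : Matrix _ _ F) := by
      rw [h]
    rw [toFunMain_snd x, toFunMain_snd y, ← hB] at hu
    -- hu : (dec Bx).2.2 * x.2.1 = (dec Bx).2.2 * y.2.1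
    have fx := fc_of x
    have fy := fc_of y
    rw [← hB] at fy
    have hP : x.2.1 = y.2.1 := by
      rw [← fx.2.1, ← fy.2.1, hu]
    have hS : x.1.1 = y.1.1 := by
      apply cancel_conj fx.1
      rw [fx.2.2, hu, fy.2.2]
    exact Prod.ext (Subtype.ext hS) (Subtype.ext hP)
  · rintro ⟨B, u⟩
    have hggi : (u : Matrix (Fin r) (Fin r) F) * (↑u⁻¹ : Matrix (Fin r) (Fin r) F) = 1 := by
      rw [← Units.val_mul, mul_inv_cancel, Units.val_one]
    have hgig : (↑u⁻¹ : Matrix (Fin r) (Fin r) F) * (u : Matrix (Fin r) (Fin r) F) = 1 := by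
      rw [← Units.val_mul, inv_mul_cancel, Units.val_one]
    set g : Matrix (Fin r) (Fin r) F := (u : Matrix (Fin r) (Fin r) F) with hgdef
    set gi : Matrix (Fin r) (Fin r) F := (↑u⁻¹ : Matrix (Fin r) (Fin r) F) with hgidef
    set P' : Matrix (Fin k) (Fin r) F := (dec B).1 * g with hP'def
    set S' : Matrix (Fin r) (Fin r) F := gi * (dec B).2.1 * giᵀ with hS'def
    have hPinj : Function.Injective P'.mulVecLin := by
      rw [hP'def, mulVecLin_mul, LinearMap.coe_comp]
      exact ((dec_spec B).1).comp (injective_of_isUnit (Units.isUnit u))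
    have hS'symm : S'.IsSymm := isSymm_conj _ (dec_spec B).2.1
    have hS'rank : S'.rank = r :=
      rank_PSPt _ _ (injective_of_isUnit (Units.isUnit u⁻¹)) (dec_spec B).2.2.1
    have hPu : P' * gi = (dec B).1 := by
      rw [hP'def, Matrix.mul_assoc, hggi, Matrix.mul_one]
    have hval : P' * S' * P'ᵀ = B.1 := by
      rw [hS'def, conj_mul, hPu, (dec_spec B).2.2.2.2]
    refine ⟨(⟨S', hS'symm, hS'rank⟩, ⟨P', hPinj⟩), ?_⟩
    have hfst : (toFunMain (⟨⟨S', hS'symm, hS'rank⟩, ⟨P', hPinj⟩⟩ :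
        SymRk r r × InjM k r)).1 = B := Subtype.ext hval
    refine Prod.ext hfst (Units.ext ?_)
    rw [toFunMain_snd, hfst]
    show (dec B).2.2 * P' = g
    rw [hP'def, ← Matrix.mul_assoc, (dec_spec B).2.2.2.1, Matrix.one_mul]

noncomputable def mainEquiv (k r : ℕ) :
    (SymRk r r × InjM k r) ≃ (SymRk k r × (Matrix (Fin r) (Fin r) F)ˣ) :=
  Equiv.ofBijective _ (main_bijective k r)

noncomputable def injEquiv (k r : ℕ) :
    InjM k r ≃ {s : Fin r → (Fin k → F) // LinearIndependent F s} where
  toFun P := ⟨fun j => P.1ᵀ j, by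
    have := P.2
    rw [coe_mulVecLin] at this
    exact mulVec_injective_iff.mp this⟩
  invFun s := ⟨(Matrix.of s.1)ᵀ, by
    rw [coe_mulVecLin]
    apply mulVec_injective_iff.mpr
    simpa using s.2⟩
  left_inv P := Subtype.ext (by ext i j; rfl)
  right_inv s := Subtype.ext (by funext j; rfl)

lemma card_inj {k r : ℕ} (hr : r ≤ k) :
    Nat.card (InjM k r) = ∏ i ∈ Finset.range r, (2 ^ k - 2 ^ i) := by
  rw [Nat.card_congr (injEquiv k r)]
  have hk : r ≤ Module.finrank F (Fin k → F) := by
    rw [Module.finrank_fintype_fun_eq_card, Fintype.card_fin]; exact hr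
  rw [card_linearIndependent hk]
  rw [Module.finrank_fintype_fun_eq_card, Fintype.card_fin]
  rw [show Fintype.card F = 2 from ZMod.card 2]
  exact Fin.prod_univ_eq_prod_range (fun i => 2 ^ k - 2 ^ i) r

lemma card_units_eq (r : ℕ) :
    Nat.card ((Matrix (Fin r) (Fin r) F)ˣ) = ∏ i ∈ Finset.range r, (2 ^ r - 2 ^ i) := by
  have h := Matrix.card_GL_field (𝔽 := F) r
  rw [show Fintype.card F = 2 from ZMod.card 2] at h
  rw [show ((Matrix (Fin r) (Fin r) F)ˣ) = GL (Fin r) F from rfl, h]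
  exact Fin.prod_univ_eq_prod_range (fun i => 2 ^ r - 2 ^ i) r

lemma main_count (k r : ℕ) :
    Nat.card (SymRk k r) * Nat.card ((Matrix (Fin r) (Fin r) F)ˣ) =
      Nat.card (SymRk r r) * Nat.card (InjM k r) := by
  rw [← Nat.card_prod, ← Nat.card_prod]
  exact (Nat.card_congr (mainEquiv k r)).symm

end


noncomputable section

open Finset

def symEquiv (k : ℕ) : {B : Matrix (Fin k) (Fin k) F // B.IsSymm} ≃
    ({p : Fin k × Fin k // p.1 ≤ p.2} → F) where
  toFun B := fun p => B.1 p.1.1 p.1.2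
  invFun f := ⟨Matrix.of fun i j =>
      if h : i ≤ j then f ⟨(i, j), h⟩ else f ⟨(j, i), le_of_not_ge h⟩, by
    rw [Matrix.IsSymm]
    ext i j
    simp only [Matrix.transpose_apply, Matrix.of_apply]
    by_cases h1 : i ≤ j <;> by_cases h2 : j ≤ i
    · have hij : i = j := le_antisymm h1 h2
      subst hij; rfl
    · rw [dif_neg h2, dif_pos h1]
    · rw [dif_pos h2, dif_neg h1]
    · exact absurd (le_total i j) (by tauto)⟩
  left_inv B := by
    apply Subtype.ext
    ext i j
    simp only [Matrix.of_apply]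
    split
    · rfl
    · next h =>
      have := congrFun (congrFun B.2 i) j
      simpa [Matrix.transpose_apply] using this
  right_inv f := by
    funext p
    rcases p with ⟨⟨i, j⟩, h⟩
    simp only [Matrix.of_apply]
    rw [dif_pos h]

lemma card_pairs (k : ℕ) : Nat.card {p : Fin k × Fin k // p.1 ≤ p.2} = k * (k+1) / 2 := by
  classical
  rw [Nat.card_eq_fintype_card, Fintype.card_subtype]
  set A := Finset.univ.filter (fun p : Fin k × Fin k => p.1 ≤ p.2) with hA
  set B := Finset.univ.filter (fun p : Fin k × Fin k => p.2 ≤ p.1) with hB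
  have hunion : A ∪ B = Finset.univ := by
    ext p
    simp [hA, hB, le_total p.1 p.2]
  have hinter : A ∩ B = Finset.univ.filter (fun p : Fin k × Fin k => p.1 = p.2) := by
    ext p
    simp only [hA, hB, Finset.mem_inter, Finset.mem_filter, Finset.mem_univ, true_and]
    constructor
    · rintro ⟨u, v⟩; exact le_antisymm u v
    · intro h; exact ⟨le_of_eq h, ge_of_eq h⟩
  have hdiag : (Finset.univ.filter (fun p : Fin k × Fin k => p.1 = p.2)).card = k := by
    have himg : Finset.univ.filter (fun p : Fin k × Fin k => p.1 = p.2)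
        = Finset.univ.image (fun i : Fin k => (i, i)) := by
      ext p
      simp only [Finset.mem_filter, Finset.mem_univ, true_and, Finset.mem_image]
      constructor
      · intro h; exact ⟨p.1, Prod.ext rfl h⟩
      · rintro ⟨i, rfl⟩; rfl
    rw [himg, Finset.card_image_of_injective _ (fun a b hab => (Prod.mk.injEq _ _ _ _).mp hab |>.1),
      Finset.card_univ, Fintype.card_fin]
  have hcardB : B.card = A.card := by
    apply Finset.card_bij (fun p _ => (p.2, p.1))
    · intro p hp
      simp only [hA, Finset.mem_filter, Finset.mem_univ, true_and]
      simp only [hB, Finset.mem_filter, Finset.mem_univ, true_and] at hp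
      exact hp
    · intro p hp q hq hpq
      have h1 := congrArg Prod.fst hpq
      have h2 := congrArg Prod.snd hpq
      simp only at h1 h2
      exact Prod.ext h2 h1
    · intro p hp
      refine ⟨(p.2, p.1), ?_, rfl⟩
      simp only [hB, Finset.mem_filter, Finset.mem_univ, true_and]
      simp only [hA, Finset.mem_filter, Finset.mem_univ, true_and] at hp
      exact hp
  have hsum := Finset.card_union_add_card_inter A B
  rw [hunion, hinter, hdiag, hcardB, Finset.card_univ] at hsum
  have huniv : Fintype.card (Fin k × Fin k) = k * k := by
    simp [Fintype.card_prod]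
  rw [huniv] at hsum
  have hkk : k * (k+1) = k * k + k := by ring
  omega

lemma card_sym_total (k : ℕ) :
    Nat.card {B : Matrix (Fin k) (Fin k) F // B.IsSymm} = 2 ^ (k * (k+1) / 2) := by
  rw [Nat.card_congr (symEquiv k), Nat.card_fun, card_pairs]
  congr 1
  rw [Nat.card_eq_fintype_card]
  exact ZMod.card 2

def sigmaEquiv (k : ℕ) : (Σ j : Fin (k+1), SymRk k j.val) ≃
    {B : Matrix (Fin k) (Fin k) F // B.IsSymm} := by
  apply Equiv.ofBijective (fun x => (⟨x.2.1, x.2.2.1⟩ : {B : Matrix (Fin k) (Fin k) F // B.IsSymm}))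
  constructor
  · rintro ⟨⟨j, hj⟩, B, hs, hr⟩ ⟨⟨j', hj'⟩, B', hs', hr'⟩ h
    have hBB : B = B' := congrArg Subtype.val h
    subst hBB
    obtain rfl : j = j' := hr.symm.trans hr'
    rfl
  · intro B
    have hle : B.1.rank ≤ k := le_trans (B.1.rank_le_card_width) (le_of_eq (Fintype.card_fin k))
    exact ⟨⟨⟨B.1.rank, by omega⟩, ⟨B.1, B.2, rfl⟩⟩, rfl⟩

lemma card_sym_sum (k : ℕ) :
    (∑ r ∈ Finset.range (k+1), Nat.card (SymRk k r)) = 2 ^ (k * (k+1) / 2) := by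
  classical
  rw [← card_sym_total k, ← Nat.card_congr (sigmaEquiv k), Nat.card_eq_fintype_card,
    Fintype.card_sigma, ← Fin.sum_univ_eq_sum_range (fun r => Nat.card (SymRk k r)) (k+1)]
  apply Finset.sum_congr rfl
  intro j _
  rw [Nat.card_eq_fintype_card]

lemma card_units_pos (r : ℕ) : 0 < Nat.card ((Matrix (Fin r) (Fin r) F)ˣ) := by
  rw [card_units_eq]
  apply Finset.prod_pos
  intro i hi
  have : (2:ℕ) ^ i < 2 ^ r := Nat.pow_lt_pow_right (by norm_num) (Finset.mem_range.mp hi)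
  omega

lemma cast_units_card (r : ℕ) : ((Nat.card ((Matrix (Fin r) (Fin r) F)ˣ)) : ℚ)
    = ∏ i ∈ Finset.range r, ((2:ℚ) ^ r - 2 ^ i) := by
  rw [card_units_eq, Nat.cast_prod]
  apply Finset.prod_congr rfl
  intro i hi
  have h : (2:ℕ) ^ i ≤ 2 ^ r := Nat.pow_le_pow_right (by norm_num) (le_of_lt (Finset.mem_range.mp hi))
  push_cast [Nat.cast_sub h]
  ring

lemma cast_inj_card {k r : ℕ} (hr : r ≤ k) : ((Nat.card (InjM k r)) : ℚ)
    = ∏ i ∈ Finset.range r, ((2:ℚ) ^ k - 2 ^ i) := by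
  rw [card_inj hr, Nat.cast_prod]
  apply Finset.prod_congr rfl
  intro i hi
  have h : (2:ℕ) ^ i ≤ 2 ^ k :=
    Nat.pow_le_pow_right (by norm_num) (le_trans (le_of_lt (Finset.mem_range.mp hi)) hr)
  push_cast [Nat.cast_sub h]
  ring

lemma fQ_eq {k r : ℕ} (hr : r ≤ k) :
    ((Nat.card (SymRk k r)) : ℚ) = ((Nat.card (SymRk r r)) : ℚ) * Gq k r := by
  have h := main_count k r
  have hcast : ((Nat.card (SymRk k r)) : ℚ) * ((Nat.card ((Matrix (Fin r) (Fin r) F)ˣ)) : ℚ)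
      = ((Nat.card (SymRk r r)) : ℚ) * ((Nat.card (InjM k r)) : ℚ) := by
    exact_mod_cast congrArg (fun n : ℕ => (n : ℚ)) h
  have hu0 : ((Nat.card ((Matrix (Fin r) (Fin r) F)ˣ)) : ℚ) ≠ 0 := by
    exact_mod_cast (card_units_pos r).ne'
  rw [Gq, Finset.prod_div_distrib, ← cast_inj_card hr, ← cast_units_card, ← mul_div_assoc,
    eq_div_iff hu0]
  exact hcast

lemma sum_ident (k : ℕ) :
    ∑ r ∈ Finset.range (k+1), ((Nat.card (SymRk r r)) : ℚ) * Gq k r = 2 ^ (k * (k+1) / 2) := by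
  have h := card_sym_sum k
  calc ∑ r ∈ Finset.range (k+1), ((Nat.card (SymRk r r)) : ℚ) * Gq k r
      = ∑ r ∈ Finset.range (k+1), ((Nat.card (SymRk k r)) : ℚ) := by
        apply Finset.sum_congr rfl
        intro r hrm
        exact (fQ_eq (by have := Finset.mem_range.mp hrm; omega)).symm
    _ = ((∑ r ∈ Finset.range (k+1), Nat.card (SymRk k r) : ℕ) : ℚ) := by push_cast; rfl
    _ = 2 ^ (k * (k+1) / 2) := by rw [h]; push_cast; ring

lemma NQ_eq_cc : ∀ r : ℕ, ((Nat.card (SymRk r r)) : ℚ) = cc r := by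
  intro r
  induction r using Nat.strong_induction_on with
  | _ r ih =>
    have h1 := sum_ident r
    have h2' : ∑ j ∈ Finset.range (r+1), cc j * Gq r j = 2 ^ (r * (r+1) / 2) := by
      calc ∑ j ∈ Finset.range (r+1), cc j * Gq r j
          = ∑ j ∈ Finset.range (r+1), Gq r (r+1-1-j) * cc (r - (r+1-1-j)) := by
            apply Finset.sum_congr rfl
            intro j hj
            have hjr : j ≤ r := by have := Finset.mem_range.mp hj; omega
            rw [show r+1-1-j = r - j from by omega, Nat.sub_sub_self hjr, ← Gq_symm hjr]
            ring
        _ = ∑ d ∈ Finset.range (r+1), Gq r d * cc (r - d) :=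
            Finset.sum_range_reflect (fun d => Gq r d * cc (r - d)) (r+1)
        _ = 2 ^ (r * (r+1) / 2) := S_val r
    rw [Finset.sum_range_succ, Gq_self, mul_one] at h1 h2'
    have hsame : ∑ j ∈ Finset.range r, ((Nat.card (SymRk j j)) : ℚ) * Gq r j
        = ∑ j ∈ Finset.range r, cc j * Gq r j := by
      apply Finset.sum_congr rfl
      intro j hj
      rw [ih j (Finset.mem_range.mp hj)]
    rw [hsame] at h1
    linarith [h1, h2']

theorem final {k r : ℕ} (hr : r ≤ k) :
    ((Nat.card (SymRk k r)) : ℚ) =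
      2 ^ (r * (r + 1) / 2) * uSeq (r + 1) *
        ∏ i ∈ Finset.range (k - r), (((2 : ℚ) ^ k - 2 ^ i) / ((2 : ℚ) ^ (k - r) - 2 ^ i)) := by
  rw [fQ_eq hr, NQ_eq_cc, Gq_symm hr, cc, Gq]

end

end Stmt8Aux

/-- The number of k×k symmetric matrices over 𝔽₂ of rank r equals
2^(r(r+1)/2) · u_{r+1} · ∏_{i=0}^{k-r-1} (2^k - 2^i)/(2^{k-r} - 2^i). -/
theorem stmt8 (k r : ℕ) (hr : r ≤ k) :
    (Nat.card {B : Matrix (Fin k) (Fin k) (ZMod 2) // B.IsSymm ∧ B.rank = r} : ℚ) =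
      2 ^ (r * (r + 1) / 2) * uSeq (r + 1) *
        ∏ i ∈ Finset.range (k - r),
          (((2 : ℚ) ^ k - 2 ^ i) / ((2 : ℚ) ^ (k - r) - 2 ^ i)) := by
  exact Stmt8Aux.final hr
end

section
/- Let n = dd' be a squarefree positive integer all of whose prime factors are ≡ 1 (mod 4), with gcd(d,d') = 1, and suppose every prime factor p of d satisfies (2d'/p) = 1 (Legendre symbol) and every prime factor p' of d' satisfies (2d/p') = 1. For each prime p | n ≡ 1 mod 4 choose the primary Gaussian prime λ_p with positive imaginary part above p, and set θ₁ = ∏_{p|d} λ_p, θ₂ = ∏_{p|d'} λ_p, η = θ₁θ₂. Then (2d'/d)₄ · (2d/d')₄ = (2/η)₄ · (θ₂/θ₁), where (·/·)₄ on the left denotes the rational quartic residue symbol and (θ₂/θ₁) denotes the quadratic (Legendre) residue symbol over ℤ[i]. -/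
/-!
Fix distinct primes `p, q ≡ 1 (mod 4)` and Gaussian primes `π ∣ p`, `κ ∣ q` with `κ ≡ 1 (mod 2)`.
The quartic character `χ = (·/κ)₄` of `𝔽_q` has Jacobi sum `J(χ, χ) = ±κ`: reduced mod `κ` it
becomes `∑ x^m (1 - x)^m = 0` with `m = (q - 1)/4`, its norm is `q`, and `J ≡ -1 (mod 2)` fixes
the unit. Over a field of characteristic `p` the Gauss sum `g = g(χ)` satisfies `g⁴ = J² q`,
while Frobenius gives `χ(p) g^p = g`; hence `χ(p) (J² q)^((p-1)/4) = 1`, and reducing mod `π`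
yields the reciprocity law `(q/π)₄ (p/κ)₄ = (κ/π)`. Expanding both sides of the theorem
multiplicatively over the primes of `d` and `d'` and pairing the factors gives the result.
-/

open Zsqrtd
open scoped Classical

/-- The quadratic (Legendre) residue symbol (α/λ) at a Gaussian prime λ coprime to
1+i: the unique element of {1, -1, 0} congruent to α^((Nλ-1)/2) modulo λ. -/
noncomputable def quadSymbol (lam α : GaussianInt) : GaussianInt :=
  if h : ∃ u : GaussianInt, (u = 1 ∨ u = -1 ∨ u = 0) ∧
      lam ∣ (α ^ (((Zsqrtd.norm lam - 1) / 2).toNat) - u)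
  then h.choose else 0

lemma FiniteField.sum_pow_mul_one_sub_pow_eq_zero {F : Type*} [Field F] [Fintype F] {m : ℕ}
    (hm : 2 * m < Fintype.card F - 1) : ∑ x : F, x ^ m * (1 - x) ^ m = 0 := by
  have hexpand (x : F) : x ^ m * (1 - x) ^ m =
      ∑ j ∈ Finset.range (m + 1), (-1) ^ j * (m.choose j : F) * x ^ (m + j) := by
    rw [sub_eq_add_neg, add_comm, add_pow, Finset.mul_sum]
    refine Finset.sum_congr rfl fun j _ => ?_
    rw [one_pow, neg_pow]
    ring
  simp only [hexpand]
  rw [Finset.sum_comm]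
  refine Finset.sum_eq_zero fun j hj => ?_
  rw [← Finset.mul_sum, FiniteField.sum_pow_lt_card_sub_one F _ (by
    have := Finset.mem_range.mp hj; omega), mul_zero]

lemma MulChar.mul_self_ne_one {R R' : Type*} [CommMonoid R] [CommRing R'] {χ : MulChar R R'}
    {a : Rˣ} (ha : χ a * χ a = -1) (h : (-1 : R') ≠ 1) : χ * χ ≠ 1 := by
  intro h1
  apply h
  rw [← ha, ← MulChar.mul_apply, h1, MulChar.one_apply_coe]

lemma MulChar.ringHomComp_apply_mul_self {R R' R'' : Type*} [CommMonoid R] [CommRing R']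
    [CommRing R''] {χ : MulChar R R'} {a : R} (ha : χ a * χ a = -1) (f : R' →+* R'') :
    χ.ringHomComp f a * χ.ringHomComp f a = -1 := by
  rw [MulChar.ringHomComp_apply, ← map_mul, ha, map_neg, map_one]

lemma gaussSum_pow_four {R R' : Type*} [Field R] [Fintype R] [CommRing R'] [IsDomain R']
    {χ : MulChar R R'} {ψ : AddChar R R'} (hχ4 : χ ^ 4 = 1) (hχχ : χ * χ ≠ 1)
    (hψ : ψ.IsPrimitive) : gaussSum χ ψ ^ 4 = jacobiSum χ χ ^ 2 * Fintype.card R := by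
  have hquad : (χ * χ).IsQuadratic := by
    rw [MulChar.isQuadratic_iff_sq_eq_one, ← pow_two, ← pow_mul]
    exact hχ4
  have hneg : (χ * χ) (-1) = 1 := by
    rw [MulChar.mul_apply, ← map_mul, neg_one_mul, neg_neg, MulChar.map_one]
  calc gaussSum χ ψ ^ 4 = (gaussSum χ ψ * gaussSum χ ψ) ^ 2 := by ring
    _ = (gaussSum (χ * χ) ψ * jacobiSum χ χ) ^ 2 := by rw [jacobiSum_mul_nontrivial hχχ]
    _ = jacobiSum χ χ ^ 2 * Fintype.card R := by
      rw [mul_pow, gaussSum_sq hχχ hquad hψ, hneg, one_mul, mul_comm]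

lemma MulChar.apply_mul_gaussSum_pow_char {R R' : Type*} [CommRing R] [Fintype R] [CommRing R']
    (p : ℕ) [Fact p.Prime] [CharP R' p] {χ : MulChar R R'} (ψ : AddChar R R') (hχp : χ ^ p = χ)
    (hp : IsUnit (p : R)) : χ p * gaussSum χ ψ ^ p = gaussSum χ ψ := by
  rw [gaussSum_frob, hχp, AddChar.pow_mulShift, ← hp.unit_spec, gaussSum_mulShift]

/-- Comparing `g(χ)^p` computed via Frobenius with `g(χ)^p = (g(χ)^4)^((p-1)/4) g(χ)`. -/
lemma MulChar.apply_natCast_mul_jacobiSum_pow_eq_one {F : Type*} [Field F] {p q : ℕ}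
    [Fact p.Prime] [Fact q.Prime] [CharP F p] (hpq : p ≠ q) (hp4 : p % 4 = 1)
    {χ : MulChar (ZMod q) F} (hχ4 : χ ^ 4 = 1) (hχχ : χ * χ ≠ 1) {ψ : AddChar (ZMod q) F}
    (hψ : ψ.IsPrimitive) : χ p * (jacobiSum χ χ ^ 2 * q) ^ ((p - 1) / 4) = 1 := by
  have hp := (Fact.out : p.Prime)
  have hq := (Fact.out : q.Prime)
  have hqF : (q : F) ≠ 0 := fun h =>
    hpq ((Nat.prime_dvd_prime_iff_eq hp hq).mp ((CharP.cast_eq_zero_iff F p q).mp h))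
  have hg : gaussSum χ ψ ≠ 0 := gaussSum_ne_zero_of_nontrivial (by rwa [ZMod.card])
    (fun h => hχχ (by rw [h, one_mul])) hψ
  have hχp : χ ^ p = χ := by
    rw [← Nat.div_add_mod p 4, hp4, pow_add, pow_mul, hχ4, one_pow, one_mul, pow_one]
  have hpunit : IsUnit (p : ZMod q) :=
    (ZMod.unitOfCoprime p ((Nat.coprime_primes hp hq).mpr hpq)).isUnit
  have hpow : gaussSum χ ψ ^ p = (gaussSum χ ψ ^ 4) ^ ((p - 1) / 4) * gaussSum χ ψ := by
    rw [← pow_mul, ← pow_succ]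
    congr 1
    omega
  have hfrob := MulChar.apply_mul_gaussSum_pow_char p ψ hχp hpunit
  rw [hpow, gaussSum_pow_four hχ4 hχχ hψ, ZMod.card, ← mul_assoc] at hfrob
  exact mul_right_cancel₀ hg (hfrob.trans (one_mul _).symm)

lemma MulChar.map_apply_natCast_mul_jacobiSum_pow_eq_one {R : Type*} [CommRing R] {p q : ℕ}
    [Fact p.Prime] [Fact q.Prime] (hpq : p ≠ q) (hp4 : p % 4 = 1) {χ : MulChar (ZMod q) R}
    (hχ4 : χ ^ 4 = 1) {a : (ZMod q)ˣ} (ha : χ a * χ a = -1) (φ : R →+* ZMod p) :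
    φ (χ p * (jacobiSum χ χ ^ 2 * q) ^ ((p - 1) / 4)) = 1 := by
  obtain ⟨n, ψ, hψ⟩ := AddChar.FiniteField.primitiveChar (ZMod q) (ZMod p)
    (by rwa [ZMod.ringChar_zmod_n, ZMod.ringChar_zmod_n])
  let ι := algebraMap (ZMod p) (CyclotomicField n (ZMod p))
  have := charP_of_injective_algebraMap ι.injective p
  have hχ4' : (χ.ringHomComp (ι.comp φ)) ^ 4 = 1 := by
    rw [MulChar.ringHomComp_pow, hχ4, MulChar.ringHomComp_one]
  have hχχ' := MulChar.mul_self_ne_one (MulChar.ringHomComp_apply_mul_self ha (ι.comp φ))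
    (Ring.neg_one_ne_one_of_char_ne_two (by rw [ringChar.eq _ p]; omega))
  have key := MulChar.apply_natCast_mul_jacobiSum_pow_eq_one hpq hp4 hχ4' hχχ' hψ
  rw [jacobiSum_ringHomComp, MulChar.ringHomComp_apply, ← map_pow, ← map_natCast (ι.comp φ) q,
    ← map_mul, ← map_pow, ← map_mul, RingHom.comp_apply] at key
  exact ι.injective (key.trans (map_one ι).symm)

lemma IsPrimaryGI.two_dvd_sub_one {θ : GaussianInt} (h : IsPrimaryGI θ) : 2 ∣ θ - 1 := by
  obtain ⟨t, ht⟩ := h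
  exact ⟨(1 + gi) * t, by rw [ht]; ring⟩

namespace GaussianInt

abbrev IsQuarticValue (u : GaussianInt) : Prop := u = 1 ∨ u = -1 ∨ u = gi ∨ u = -gi ∨ u = 0

abbrev IsQuadValue (u : GaussianInt) : Prop := u = 1 ∨ u = -1 ∨ u = 0

lemma gi_mul_gi : gi * gi = -1 := by decide

namespace IsQuarticValue

variable {u v : GaussianInt}

lemma mul (hu : IsQuarticValue u) (hv : IsQuarticValue v) : IsQuarticValue (u * v) := by
  rcases hu with rfl | rfl | rfl | rfl | rfl <;> rcases hv with rfl | rfl | rfl | rfl | rfl <;>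
    decide

lemma isQuadValue_sq (hu : IsQuarticValue u) : IsQuadValue (u ^ 2) := by
  rcases hu with rfl | rfl | rfl | rfl | rfl <;> decide

lemma pow_four (hu : IsQuarticValue u) (h0 : u ≠ 0) : u ^ 4 = 1 := by
  rcases hu with rfl | rfl | rfl | rfl | rfl <;> first | decide | exact absurd rfl h0

lemma mul_star (hu : IsQuarticValue u) : u * star u = 1 ∨ u = 0 := by
  rcases hu with rfl | rfl | rfl | rfl | rfl <;> decide

/-- Distinct values differ by an element of norm `1`, `2` or `4`. -/
lemma eq_of_dvd_sub {π : GaussianInt} (hπ : 4 < π.norm) (hu : IsQuarticValue u)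
    (hv : IsQuarticValue v) (h : π ∣ u - v) : u = v := by
  by_contra hne
  have hnorm : 0 < (u - v).norm ∧ (u - v).norm ≤ 4 := by
    rcases hu with rfl | rfl | rfl | rfl | rfl <;> rcases hv with rfl | rfl | rfl | rfl | rfl <;>
      first | exact absurd rfl hne | decide
  have := Int.le_of_dvd hnorm.1 (map_dvd Zsqrtd.normMonoidHom h)
  simp only [Zsqrtd.normMonoidHom, MonoidHom.coe_mk, OneHom.coe_mk] at this
  omega

end IsQuarticValue

lemma IsQuadValue.isQuarticValue {u : GaussianInt} (hu : IsQuadValue u) : IsQuarticValue u := by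
  rcases hu with rfl | rfl | rfl <;> decide

lemma eq_one_or_neg_one_of_norm_eq_one {w : GaussianInt} (hw : w.norm = 1) (h2 : 2 ∣ w + 1) :
    w = 1 ∨ w = -1 := by
  obtain ⟨-, k, hk⟩ := (Zsqrtd.intCast_dvd 2 (w + 1)).1 (by exact_mod_cast h2)
  simp only [Zsqrtd.im_add, Zsqrtd.im_one, add_zero] at hk
  rw [Zsqrtd.norm_def, hk] at hw
  have hk0 : k = 0 := mul_self_eq_zero.mp (by nlinarith [mul_self_nonneg w.re, mul_self_nonneg k])
  have him : w.im = 0 := by rw [hk, hk0, mul_zero]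
  have hre : w.re * w.re = 1 := by rw [hk0] at hw; linarith
  rcases mul_self_eq_one_iff.mp hre with h | h
  · exact Or.inl (Zsqrtd.ext h him)
  · exact Or.inr (Zsqrtd.ext h (by simp [him]))

lemma gi_isPrimitiveRoot : IsPrimitiveRoot gi 4 := by
  rw [IsPrimitiveRoot.iff (by norm_num)]
  refine ⟨by decide, fun l h0 hl => ?_⟩
  interval_cases l <;> decide

structure IsPrimeAbove (π : GaussianInt) (p : ℕ) : Prop where
  prime : Prime π
  nat_prime : p.Prime
  mod_four : p % 4 = 1
  mul_star : π * star π = p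

namespace IsPrimeAbove

section Symbols

variable {π : GaussianInt} {p : ℕ} (hπ : IsPrimeAbove π p)
include hπ

lemma norm_eq : π.norm = p := by
  have h := Zsqrtd.norm_eq_mul_conj π
  rw [hπ.mul_star] at h
  exact_mod_cast h

lemma five_le : 5 ≤ p := by
  have := hπ.nat_prime.two_le
  have := hπ.mod_four
  omega

lemma quartic_exponent :
    ((π.norm - 1) / 4).toNat = (p - 1) / 4 := by
  rw [hπ.norm_eq]
  have := hπ.five_le
  omega

lemma quad_exponent :
    ((π.norm - 1) / 2).toNat = 2 * ((p - 1) / 4) := by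
  rw [hπ.norm_eq]
  have := hπ.five_le
  have := hπ.mod_four
  omega

lemma dvd_natCast : π ∣ (p : GaussianInt) :=
  ⟨star π, hπ.mul_star.symm⟩

/-- Writing `π = a + bi`, the residue map sends `i` to `-a/b`, a square root of `-1` mod `p`. -/
lemma exists_residueMap :
    ∃ φ : GaussianInt →+* ZMod p, ∀ x, φ x = 0 ↔ π ∣ x := by
  have := Fact.mk hπ.nat_prime
  have hnorm : π.re * π.re + π.im * π.im = p := by
    have := hπ.norm_eq
    rw [Zsqrtd.norm_def] at this
    linarith
  set a : ZMod p := (π.re : ZMod p)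
  set b : ZMod p := (π.im : ZMod p)
  have hab : a * a + b * b = 0 := by
    have := congrArg (fun z : ℤ => (z : ZMod p)) hnorm
    simpa [a, b] using this
  have hb : b ≠ 0 := by
    intro hb0
    have hpa : (p : ℤ) ∣ π.re := by
      rw [hb0, mul_zero, add_zero, mul_self_eq_zero] at hab
      exact (ZMod.intCast_zmod_eq_zero_iff_dvd _ p).mp hab
    have hpb : (p : ℤ) ∣ π.im := (ZMod.intCast_zmod_eq_zero_iff_dvd _ p).mp hb0
    have hpp := dvd_add (mul_dvd_mul hpa hpa) (mul_dvd_mul hpb hpb)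
    rw [hnorm] at hpp
    have := Int.le_of_dvd (by exact_mod_cast hπ.nat_prime.pos) hpp
    nlinarith [hπ.five_le]
  have hsq : (-a * b⁻¹) * (-a * b⁻¹) = ((-1 : ℤ) : ZMod p) := by
    field_simp
    push_cast
    linear_combination hab
  let φ : GaussianInt →+* ZMod p := Zsqrtd.lift ⟨-a * b⁻¹, hsq⟩
  have hφπ : φ π = 0 := by
    change a + b * (-a * b⁻¹) = 0
    field_simp
    ring
  have hker : RingHom.ker φ = Ideal.span {π} := by
    refine ((PrincipalIdealRing.isMaximal_of_irreducible hπ.prime.irreducible).eq_of_le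
      (RingHom.ker_ne_top φ) ?_).symm
    rw [Ideal.span_le, Set.singleton_subset_iff]
    exact hφπ
  refine ⟨φ, fun x => ?_⟩
  rw [← RingHom.mem_ker, hker, Ideal.mem_span_singleton]

lemma exists_isQuarticValue_dvd (x : GaussianInt) :
    ∃ u, IsQuarticValue u ∧ π ∣ x ^ ((p - 1) / 4) - u := by
  have := Fact.mk hπ.nat_prime
  obtain ⟨φ, hφ⟩ := hπ.exists_residueMap
  suffices ∃ u, IsQuarticValue u ∧ φ u = φ x ^ ((p - 1) / 4) by
    obtain ⟨u, hu, hφu⟩ := this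
    exact ⟨u, hu, (hφ _).mp (by rw [map_sub, map_pow, hφu, sub_self])⟩
  have h5 := hπ.five_le
  by_cases hx : φ x = 0
  · exact ⟨0, by decide, by rw [hx, map_zero, zero_pow (by omega)]⟩
  set y := φ x ^ ((p - 1) / 4)
  have hy : y ^ 4 = 1 := by
    rw [← pow_mul, show (p - 1) / 4 * 4 = p - 1 by have := hπ.mod_four; omega]
    exact ZMod.pow_card_sub_one_eq_one hx
  have hi : φ gi * φ gi = -1 := by rw [← map_mul, gi_mul_gi, map_neg, map_one]
  have hfactor : (y - 1) * (y + 1) * (y - φ gi) * (y + φ gi) = 0 := by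
    linear_combination hy - (y ^ 2 - 1) * hi
  simp only [mul_eq_zero, sub_eq_zero, add_eq_zero_iff_eq_neg] at hfactor
  rcases hfactor with ((h | h) | h) | h
  · exact ⟨1, by decide, by rw [map_one, h]⟩
  · exact ⟨-1, by decide, by rw [map_neg, map_one, h]⟩
  · exact ⟨gi, by decide, h.symm⟩
  · exact ⟨-gi, by decide, by rw [map_neg, h]⟩

lemma quarticSymbol_spec (x : GaussianInt) :
    IsQuarticValue (quarticSymbol π x) ∧ π ∣ x ^ ((p - 1) / 4) - quarticSymbol π x := by
  have hex : ∃ u, IsQuarticValue u ∧ π ∣ x ^ ((π.norm - 1) / 4).toNat - u := by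
    rw [hπ.quartic_exponent]
    exact hπ.exists_isQuarticValue_dvd x
  rw [quarticSymbol, dif_pos hex, ← hπ.quartic_exponent]
  exact hex.choose_spec

lemma four_lt_norm : 4 < π.norm := by
  have := hπ.five_le
  rw [hπ.norm_eq]
  omega

lemma quarticSymbol_eq_of_dvd {x u : GaussianInt} (hu : IsQuarticValue u)
    (h : π ∣ x ^ ((p - 1) / 4) - u) : quarticSymbol π x = u := by
  obtain ⟨hs, hxs⟩ := hπ.quarticSymbol_spec x
  refine hs.eq_of_dvd_sub hπ.four_lt_norm hu ?_
  simpa only [sub_sub_sub_cancel_left] using dvd_sub h hxs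

lemma quarticSymbol_congr {x y : GaussianInt} (h : π ∣ x - y) :
    quarticSymbol π x = quarticSymbol π y := by
  obtain ⟨hs, hys⟩ := hπ.quarticSymbol_spec y
  refine hπ.quarticSymbol_eq_of_dvd hs ?_
  simpa only [sub_add_sub_cancel] using
    dvd_add (h.trans (sub_dvd_pow_sub_pow x y ((p - 1) / 4))) hys

lemma quarticSymbol_mul (x y : GaussianInt) :
    quarticSymbol π (x * y) = quarticSymbol π x * quarticSymbol π y := by
  obtain ⟨hu, hxu⟩ := hπ.quarticSymbol_spec x
  obtain ⟨hv, hyv⟩ := hπ.quarticSymbol_spec y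
  refine hπ.quarticSymbol_eq_of_dvd (hu.mul hv) ?_
  have : (x * y) ^ ((p - 1) / 4) - quarticSymbol π x * quarticSymbol π y =
      x ^ ((p - 1) / 4) * (y ^ ((p - 1) / 4) - quarticSymbol π y) +
        quarticSymbol π y * (x ^ ((p - 1) / 4) - quarticSymbol π x) := by ring
  rw [this]
  exact dvd_add (hyv.mul_left _) (hxu.mul_left _)

lemma quarticSymbol_one : quarticSymbol π 1 = 1 :=
  hπ.quarticSymbol_eq_of_dvd (Or.inl rfl) (by rw [one_pow, sub_self]; exact dvd_zero π)

lemma quarticSymbol_zero : quarticSymbol π 0 = 0 :=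
  hπ.quarticSymbol_eq_of_dvd (by decide)
    (by rw [zero_pow (by have := hπ.five_le; omega), sub_zero]; exact dvd_zero π)

lemma quarticSymbol_neg_one : quarticSymbol π (-1) = (-1) ^ ((p - 1) / 4) := by
  refine hπ.quarticSymbol_eq_of_dvd ?_ (by rw [sub_self]; exact dvd_zero π)
  rcases neg_one_pow_eq_or GaussianInt ((p - 1) / 4) with h | h <;> rw [h] <;> decide

noncomputable def quarticSymbolHom : GaussianInt →* GaussianInt where
  toFun := quarticSymbol π
  map_one' := hπ.quarticSymbol_one
  map_mul' := hπ.quarticSymbol_mul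

lemma quarticSymbol_prod {ι : Type*} (s : Finset ι) (f : ι → GaussianInt) :
    quarticSymbol π (∏ i ∈ s, f i) = ∏ i ∈ s, quarticSymbol π (f i) :=
  map_prod hπ.quarticSymbolHom f s

lemma map_quarticSymbol {φ : GaussianInt →+* ZMod p} (hφ : ∀ x, φ x = 0 ↔ π ∣ x)
    (x : GaussianInt) : φ (quarticSymbol π x) = φ x ^ ((p - 1) / 4) := by
  rw [← map_pow, eq_comm, ← sub_eq_zero, ← map_sub, hφ]
  exact (hπ.quarticSymbol_spec x).2

lemma quadSymbol_eq_sq (x : GaussianInt) : quadSymbol π x = quarticSymbol π x ^ 2 := by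
  obtain ⟨hs, hxs⟩ := hπ.quarticSymbol_spec x
  have hdvd {v : GaussianInt} (hv : π ∣ x ^ ((π.norm - 1) / 2).toNat - v) :
      π ∣ quarticSymbol π x ^ 2 - v := by
    rw [hπ.quad_exponent, pow_mul'] at hv
    have := dvd_sub hv (hxs.trans (sub_dvd_pow_sub_pow _ _ 2))
    rwa [sub_sub_sub_cancel_left] at this
  have hex : ∃ u, IsQuadValue u ∧ π ∣ x ^ ((π.norm - 1) / 2).toNat - u := by
    refine ⟨_, hs.isQuadValue_sq, ?_⟩
    rw [hπ.quad_exponent, pow_mul']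
    exact hxs.trans (sub_dvd_pow_sub_pow _ _ 2)
  rw [quadSymbol, dif_pos hex]
  obtain ⟨hv, hxv⟩ := hex.choose_spec
  exact (hs.isQuadValue_sq.isQuarticValue.eq_of_dvd_sub hπ.four_lt_norm hv.isQuarticValue
    (hdvd hxv)).symm

lemma quadSymbol_prod {ι : Type*} (s : Finset ι) (f : ι → GaussianInt) :
    quadSymbol π (∏ i ∈ s, f i) = ∏ i ∈ s, quadSymbol π (f i) := by
  simp only [hπ.quadSymbol_eq_sq, hπ.quarticSymbol_prod, Finset.prod_pow]

lemma quadSymbol_neg (x : GaussianInt) : quadSymbol π (-x) = quadSymbol π x := by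
  rw [hπ.quadSymbol_eq_sq, hπ.quadSymbol_eq_sq, show -x = -1 * x by ring, hπ.quarticSymbol_mul,
    hπ.quarticSymbol_neg_one, mul_pow, ← pow_mul, pow_mul', neg_one_sq, one_pow, one_mul]

lemma quarticSymbol_two_mul_of_squarefree {m : ℕ} (hm : Squarefree m) :
    quarticSymbol π ((2 * m : ℕ) : GaussianInt) =
      quarticSymbol π 2 * ∏ q ∈ m.primeFactors, quarticSymbol π q := by
  conv_lhs => rw [← Nat.prod_primeFactors_of_squarefree hm]
  push_cast
  rw [hπ.quarticSymbol_mul, hπ.quarticSymbol_prod]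

lemma eq_of_map_eq {φ : GaussianInt →+* ZMod p} (hφ : ∀ x, φ x = 0 ↔ π ∣ x)
    {u v : GaussianInt} (hu : IsQuarticValue u) (hv : IsQuarticValue v) (h : φ u = φ v) :
    u = v :=
  hu.eq_of_dvd_sub hπ.four_lt_norm hv ((hφ _).mp (by rw [map_sub, h, sub_self]))

end Symbols

section QuarticChar

variable {κ : GaussianInt} {q : ℕ} (hκ : IsPrimeAbove κ q)
include hκ

lemma quarticSymbol_natCast_congr {m n : ℕ} (h : (m : ZMod q) = n) :
    quarticSymbol κ m = quarticSymbol κ n := by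
  refine hκ.quarticSymbol_congr (hκ.dvd_natCast.trans ?_)
  rw [← Int.cast_natCast (R := ZMod q), ← Int.cast_natCast (R := ZMod q) n,
    ZMod.intCast_eq_intCast_iff_dvd_sub, ← dvd_neg, neg_sub] at h
  exact_mod_cast h

noncomputable def quarticChar : MulChar (ZMod q) GaussianInt where
  toFun a := quarticSymbol κ a.val
  map_one' := by
    have := Fact.mk hκ.nat_prime
    rw [ZMod.val_one, Nat.cast_one, hκ.quarticSymbol_one]
  map_mul' a b := by
    have := NeZero.of_pos hκ.nat_prime.pos
    rw [← hκ.quarticSymbol_mul, ← Nat.cast_mul]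
    exact hκ.quarticSymbol_natCast_congr (by simp)
  map_nonunit' a ha := by
    have := Fact.mk hκ.nat_prime
    rw [not_not.mp (isUnit_iff_ne_zero.not.mp ha), ZMod.val_zero, Nat.cast_zero,
      hκ.quarticSymbol_zero]

lemma quarticChar_natCast (n : ℕ) : hκ.quarticChar n = quarticSymbol κ n :=
  hκ.quarticSymbol_natCast_congr (by simp)

lemma isQuarticValue_quarticChar (a : ZMod q) : IsQuarticValue (hκ.quarticChar a) :=
  (hκ.quarticSymbol_spec _).1

lemma map_quarticChar {φ : GaussianInt →+* ZMod q} (hφ : ∀ x, φ x = 0 ↔ κ ∣ x) (a : ZMod q) :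
    φ (hκ.quarticChar a) = a ^ ((q - 1) / 4) := by
  have := NeZero.of_pos hκ.nat_prime.pos
  change φ (quarticSymbol κ a.val) = _
  rw [hκ.map_quarticSymbol hφ, map_natCast, ZMod.natCast_zmod_val]

lemma quarticChar_pow_four : hκ.quarticChar ^ 4 = 1 := by
  refine MulChar.ext fun a => ?_
  rw [MulChar.pow_apply' _ four_ne_zero, MulChar.one_apply_coe]
  exact (hκ.isQuarticValue_quarticChar a).pow_four (a.isUnit.map _).ne_zero

lemma quarticChar_inv_apply [Fact q.Prime] (a : ZMod q) :
    hκ.quarticChar a⁻¹ = star (hκ.quarticChar a) := by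
  rcases eq_or_ne a 0 with rfl | ha
  · rw [inv_zero, MulChar.map_zero, star_zero]
  have hunit := (isUnit_iff_ne_zero.mpr ha).map hκ.quarticChar
  refine mul_left_cancel₀ hunit.ne_zero ?_
  rw [← map_mul, mul_inv_cancel₀ ha, map_one]
  exact ((hκ.isQuarticValue_quarticChar a).mul_star.resolve_right hunit.ne_zero).symm

lemma exists_quarticChar_mul_self_eq_neg_one [Fact q.Prime] :
    ∃ a : (ZMod q)ˣ, hκ.quarticChar a * hκ.quarticChar a = -1 := by
  obtain ⟨φ, hφ⟩ := hκ.exists_residueMap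
  have hq2 : ringChar (ZMod q) ≠ 2 := by
    rw [ZMod.ringChar_zmod_n]; have := hκ.five_le; omega
  obtain ⟨a, ha⟩ := FiniteField.exists_nonsquare hq2
  have ha0 : a ≠ 0 := by rintro rfl; exact ha ⟨0, by ring⟩
  have hpow : a ^ (q / 2) = -1 :=
    (ZMod.pow_div_two_eq_neg_one_or_one q ha0).resolve_left
      ((ZMod.euler_criterion q ha0).not.mp ha)
  refine ⟨Units.mk0 a ha0, hκ.eq_of_map_eq hφ
    ((hκ.isQuarticValue_quarticChar _).mul (hκ.isQuarticValue_quarticChar _)) (by decide) ?_⟩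
  rw [map_mul, hκ.map_quarticChar hφ, Units.val_mk0, ← pow_add, map_neg, map_one, ← hpow]
  congr 1
  have := hκ.mod_four
  omega

variable [Fact q.Prime]

lemma dvd_jacobiSum : κ ∣ jacobiSum hκ.quarticChar hκ.quarticChar := by
  obtain ⟨φ, hφ⟩ := hκ.exists_residueMap
  rw [← hφ, jacobiSum, map_sum]
  simp only [map_mul, hκ.map_quarticChar hφ]
  refine FiniteField.sum_pow_mul_one_sub_pow_eq_zero ?_
  have := hκ.five_le
  rw [ZMod.card]
  omega

lemma jacobiSum_mul_star :
    jacobiSum hκ.quarticChar hκ.quarticChar *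
      star (jacobiSum hκ.quarticChar hκ.quarticChar) = q := by
  obtain ⟨a, ha⟩ := hκ.exists_quarticChar_mul_self_eq_neg_one
  set χ := hκ.quarticChar.ringHomComp GaussianInt.toComplex
  have hχχ : χ * χ ≠ 1 := MulChar.mul_self_ne_one
    (MulChar.ringHomComp_apply_mul_self ha _) (by norm_num)
  have hχ : χ ≠ 1 := fun h => hχχ (by rw [h, one_mul])
  have hchar : ringChar ℂ ≠ ringChar (ZMod q) := by
    rw [ZMod.ringChar_zmod_n, ringChar.eq_zero]
    exact (Fact.out : q.Prime).ne_zero.symm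
  have hinv : χ⁻¹ = hκ.quarticChar.ringHomComp ((starRingEnd ℂ).comp GaussianInt.toComplex) := by
    refine MulChar.ext fun b => ?_
    rw [MulChar.inv_apply', MulChar.ringHomComp_apply, MulChar.ringHomComp_apply,
      hκ.quarticChar_inv_apply, RingHom.comp_apply, GaussianInt.toComplex_star]
  have := jacobiSum_mul_jacobiSum_inv hchar hχ hχ hχχ
  rw [hinv, jacobiSum_ringHomComp, jacobiSum_ringHomComp, RingHom.comp_apply, ZMod.card,
    ← GaussianInt.toComplex_star, ← map_mul] at this
  exact GaussianInt.toComplex_injective (by rw [this, map_natCast])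

lemma two_dvd_jacobiSum_add_one : 2 ∣ jacobiSum hκ.quarticChar hκ.quarticChar + 1 := by
  have h4 := hκ.quarticChar_pow_four
  obtain ⟨z, -, hz⟩ := exists_jacobiSum_eq_neg_one_add (by norm_num) h4 h4
    (by have := hκ.mod_four; rw [ZMod.card]; omega) gi_isPrimitiveRoot
  have hgi : (gi - 1) ^ 2 = 2 * -gi := by decide
  exact ⟨z * -gi, by rw [hz, hgi]; ring⟩

lemma jacobiSum_eq_or_eq_neg (h2 : 2 ∣ κ - 1) :
    jacobiSum hκ.quarticChar hκ.quarticChar = κ ∨ jacobiSum hκ.quarticChar hκ.quarticChar = -κ := by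
  obtain ⟨w, hw⟩ := hκ.dvd_jacobiSum
  have hκ0 : κ * star κ ≠ 0 := by
    rw [hκ.mul_star]; exact_mod_cast (Fact.out : q.Prime).ne_zero
  have hw1 : w.norm = 1 := by
    have h := hκ.jacobiSum_mul_star
    rw [hw, star_mul, ← hκ.mul_star, show κ * w * (star w * star κ) = κ * star κ * (w * star w) by
      ring] at h
    have := mul_left_cancel₀ hκ0 (h.trans (mul_one _).symm)
    rw [← Zsqrtd.norm_eq_mul_conj] at this
    exact_mod_cast this
  have hw2 : 2 ∣ w + 1 := by
    have := dvd_sub hκ.two_dvd_jacobiSum_add_one (h2.mul_right w)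
    rwa [hw, show κ * w + 1 - (κ - 1) * w = w + 1 by ring] at this
  rcases eq_one_or_neg_one_of_norm_eq_one hw1 hw2 with rfl | rfl
  · exact Or.inl (by rw [hw, mul_one])
  · exact Or.inr (by rw [hw, mul_neg_one])

end QuarticChar

section Reciprocity

variable {π κ : GaussianInt} {p q : ℕ} (hπ : IsPrimeAbove π p) (hκ : IsPrimeAbove κ q)
include hπ hκ

lemma quarticSymbol_mul_quarticSymbol_eq_quadSymbol_jacobiSum [Fact q.Prime] (hpq : p ≠ q) :
    quarticSymbol π q * quarticSymbol κ p =
      quadSymbol π (jacobiSum hκ.quarticChar hκ.quarticChar) := by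
  have := Fact.mk hπ.nat_prime
  obtain ⟨φ, hφ⟩ := hπ.exists_residueMap
  obtain ⟨a, ha⟩ := hκ.exists_quarticChar_mul_self_eq_neg_one
  set J := jacobiSum hκ.quarticChar hκ.quarticChar
  obtain ⟨hA, -⟩ := hπ.quarticSymbol_spec q
  obtain ⟨hB, -⟩ := hκ.quarticSymbol_spec p
  obtain ⟨hs, -⟩ := hπ.quarticSymbol_spec J
  have hBsA : quarticSymbol κ p * (quarticSymbol π J ^ 2 * quarticSymbol π q) = 1 := by
    refine hπ.eq_of_map_eq hφ (hB.mul (hs.isQuadValue_sq.isQuarticValue.mul hA)) (by decide) ?_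
    rw [map_one, ← MulChar.map_apply_natCast_mul_jacobiSum_pow_eq_one hpq hπ.mod_four
      hκ.quarticChar_pow_four ha φ, hκ.quarticChar_natCast]
    simp only [map_mul, map_pow, hπ.map_quarticSymbol hφ]
    ring
  have hs4 : quarticSymbol π J ^ 4 = 1 :=
    hs.pow_four fun h0 => by rw [h0] at hBsA; simp at hBsA
  rw [hπ.quadSymbol_eq_sq]
  linear_combination (quarticSymbol π J ^ 2) * hBsA - quarticSymbol π q * quarticSymbol κ p * hs4

theorem quarticSymbol_mul_quarticSymbol_eq_quadSymbol (hpq : p ≠ q) (h2 : 2 ∣ κ - 1) :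
    quarticSymbol π q * quarticSymbol κ p = quadSymbol π κ := by
  have := Fact.mk hκ.nat_prime
  rw [hπ.quarticSymbol_mul_quarticSymbol_eq_quadSymbol_jacobiSum hκ hpq]
  rcases hκ.jacobiSum_eq_or_eq_neg h2 with h | h <;> rw [h]
  exact hπ.quadSymbol_neg κ

end Reciprocity

end IsPrimeAbove

end GaussianInt

theorem stmt13_general (n d d' : ℕ) (lam : ℕ → GaussianInt)
    (hn : 0 < n) (hsf : Squarefree n) (hdd : n = d * d') (hcop : Nat.Coprime d d')
    (hmod : ∀ p ∈ n.primeFactors, p % 4 = 1)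
    (hlam : ∀ p ∈ n.primeFactors, Prime (lam p) ∧ IsPrimaryGI (lam p) ∧
      0 < (lam p).im ∧ lam p * star (lam p) = (p : GaussianInt)) :
    (∏ p ∈ d.primeFactors, quarticSymbol (lam p) ((2 * d' : ℕ) : GaussianInt)) *
      (∏ p ∈ d'.primeFactors, quarticSymbol (lam p) ((2 * d : ℕ) : GaussianInt)) =
    (∏ p ∈ n.primeFactors, quarticSymbol (lam p) 2) *
      (∏ p ∈ d.primeFactors, quadSymbol (lam p) (∏ q ∈ d'.primeFactors, lam q)) := by
  have hunion : n.primeFactors = d.primeFactors ∪ d'.primeFactors := by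
    rw [hdd, Nat.primeFactors_mul] <;> rintro rfl <;> simp_all
  have habove (p : ℕ) (hp : p ∈ n.primeFactors) : (lam p).IsPrimeAbove p :=
    ⟨(hlam p hp).1, Nat.prime_of_mem_primeFactors hp, hmod p hp, (hlam p hp).2.2.2⟩
  have hd (p : ℕ) (hp : p ∈ d.primeFactors) : p ∈ n.primeFactors :=
    hunion ▸ Finset.mem_union_left _ hp
  have hd' (q : ℕ) (hq : q ∈ d'.primeFactors) : q ∈ n.primeFactors :=
    hunion ▸ Finset.mem_union_right _ hq
  have hrec (p : ℕ) (hp : p ∈ d.primeFactors) (q : ℕ) (hq : q ∈ d'.primeFactors) :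
      quarticSymbol (lam p) q * quarticSymbol (lam q) p = quadSymbol (lam p) (lam q) :=
    (habove p (hd p hp)).quarticSymbol_mul_quarticSymbol_eq_quadSymbol (habove q (hd' q hq))
      (fun h => Finset.disjoint_left.mp hcop.disjoint_primeFactors hp (h ▸ hq))
      (hlam q (hd' q hq)).2.1.two_dvd_sub_one
  have hsfd : Squarefree d := hsf.squarefree_of_dvd (Dvd.intro _ hdd.symm)
  have hsfd' : Squarefree d' := hsf.squarefree_of_dvd (Dvd.intro_left _ hdd.symm)
  rw [Finset.prod_congr rfl fun p hp =>
      (habove p (hd p hp)).quarticSymbol_two_mul_of_squarefree hsfd',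
    Finset.prod_congr rfl fun q hq =>
      (habove q (hd' q hq)).quarticSymbol_two_mul_of_squarefree hsfd,
    Finset.prod_congr rfl fun p hp => (habove p (hd p hp)).quadSymbol_prod d'.primeFactors lam,
    hunion, Finset.prod_union hcop.disjoint_primeFactors]
  simp only [Finset.prod_mul_distrib]
  rw [Finset.prod_comm (s := d'.primeFactors), ← Finset.prod_congr rfl fun p hp =>
    Finset.prod_congr rfl (hrec p hp)]
  simp only [Finset.prod_mul_distrib]
  ring

/-- Let n = d·d' be squarefree with all prime factors ≡ 1 (mod 4), gcd(d,d') = 1,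
such that (2d'/p) = 1 for all p | d and (2d/p') = 1 for all p' | d'.  With λ_p the
primary Gaussian prime of positive imaginary part above p, θ₁ = ∏_{p|d} λ_p,
θ₂ = ∏_{p|d'} λ_p and η = θ₁θ₂, we have
(2d'/d)₄ · (2d/d')₄ = (2/η)₄ · (θ₂/θ₁). -/
theorem stmt13 (n d d' : ℕ) (lam : ℕ → GaussianInt)
    (hn : 0 < n) (hsf : Squarefree n) (hdd : n = d * d') (hcop : Nat.Coprime d d')
    (hmod : ∀ p ∈ n.primeFactors, p % 4 = 1)
    (hleg₁ : ∀ p ∈ d.primeFactors,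
      IsSquare ((2 * d' : ℕ) : ZMod p) ∧ ((2 * d' : ℕ) : ZMod p) ≠ 0)
    (hleg₂ : ∀ p ∈ d'.primeFactors,
      IsSquare ((2 * d : ℕ) : ZMod p) ∧ ((2 * d : ℕ) : ZMod p) ≠ 0)
    (hlam : ∀ p ∈ n.primeFactors, Prime (lam p) ∧ IsPrimaryGI (lam p) ∧
      0 < (lam p).im ∧ lam p * star (lam p) = (p : GaussianInt)) :
    (∏ p ∈ d.primeFactors, quarticSymbol (lam p) ((2 * d' : ℕ) : GaussianInt)) *
      (∏ p ∈ d'.primeFactors, quarticSymbol (lam p) ((2 * d : ℕ) : GaussianInt)) =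
    (∏ p ∈ n.primeFactors, quarticSymbol (lam p) 2) *
      (∏ p ∈ d.primeFactors, quadSymbol (lam p) (∏ q ∈ d'.primeFactors, lam q)) :=
  stmt13_general n d d' lam hn hsf hdd hcop hmod hlam
end
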